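/- arXiv:2207.05143 — 6 statements merged into one kernel-verified Lean document; each statement's English description precedes it below -/
import Mathlib

section
/- Let ℓ be a prime and let n ≥ j ≥ 0 and u be integers with j ≥ max(u, 0) and n ≥ j. If M is an (n−u)×n matrix with entries chosen independently and uniformly at random from the field F_ℓ, then the probability that the kernel of M (as a linear map F_ℓ^n → F_ℓ^{n−u}) has dimension exactly j equals ℓ^{−j(j−u)} · ∏_{k=1}^{j−u} (1−ℓ^{−k−n+j})/(1−ℓ^{−k}) · ∏_{k=1}^{j} (1−ℓ^{−k})^{−1} · ∏_{k=1}^{n} (1−ℓ^{−k}). -/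
/-!
A matrix `M` with `dim ker M = j` is a linear map `𝔽_ℓⁿ → 𝔽_ℓʳ` of rank `k = n - j`, and
factoring it through its image shows that the pairs (surjection `𝔽_ℓⁿ → 𝔽_ℓᵏ`, injection
`𝔽_ℓᵏ → 𝔽_ℓʳ`) are exactly the rank-`k` maps, each counted `|GL_k(𝔽_ℓ)|` times. Counting
surjections, injections and `GL_k` by linearly independent families of rows or columns gives
`#{M} · ∏_{i<k} (ℓᵏ - ℓⁱ) = ∏_{i<k} (ℓⁿ - ℓⁱ) · ∏_{i<k} (ℓʳ - ℓⁱ)`, and the stated formula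
follows from `∏_{i<b} (xᵃ - xⁱ) = x^{ab} (x⁻¹; x⁻¹)_a / (x⁻¹; x⁻¹)_{a-b}`.
-/

open Function LinearMap Module Finset

namespace LinearMap

variable {K V W U : Type*} [Field K] [AddCommGroup V] [Module K V] [AddCommGroup W] [Module K W]
  [AddCommGroup U] [Module K U]

/-- The inverse sends `(s, i)` to `i ∘ s`, whose range is that of `i` because `s` is surjective. -/
noncomputable def sigmaRangeEquivSurjectiveProdInjective :
    (Σ f : V →ₗ[K] W, U ≃ₗ[K] range f) ≃
      {s : V →ₗ[K] U // Surjective s} × {i : U →ₗ[K] W // Injective i} :=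
  Equiv.ofBijective
    (fun ⟨f, e⟩ => (⟨e.symm ∘ₗ f.rangeRestrict, e.symm.surjective.comp f.surjective_rangeRestrict⟩,
      ⟨(range f).subtype ∘ₗ e, (range f).injective_subtype.comp e.injective⟩))
    (by
      constructor
      · rintro ⟨f, e⟩ ⟨f', e'⟩ h
        simp only [Prod.mk.injEq, Subtype.mk.injEq] at h
        obtain ⟨hs, hi⟩ := h
        have recover (f : V →ₗ[K] W) (e : U ≃ₗ[K] range f) :
            ((range f).subtype ∘ₗ e.toLinearMap) ∘ₗ (e.symm.toLinearMap ∘ₗ f.rangeRestrict) = f := by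
          ext; simp
        obtain rfl : f = f' := by rw [← recover f e, ← recover f' e', hs, hi]
        congr
        ext x
        exact congr($hi x)
      · rintro ⟨⟨s, hs⟩, ⟨i, hi⟩⟩
        refine ⟨⟨i ∘ₗ s, (LinearEquiv.ofInjective i hi).trans
          (LinearEquiv.ofEq _ _ (range_comp_of_range_eq_top i (range_eq_top.2 hs)).symm)⟩, ?_⟩
        simp only [Prod.mk.injEq, Subtype.mk.injEq]
        constructor
        · ext x
          rw [comp_apply, LinearEquiv.coe_coe, LinearEquiv.symm_apply_eq]
          rfl
        · ext x
          simp)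

noncomputable def sigmaRangeEquivFinrankProd [FiniteDimensional K U] [FiniteDimensional K W] :
    (Σ f : V →ₗ[K] W, U ≃ₗ[K] range f) ≃
      {f : V →ₗ[K] W // finrank K (range f) = finrank K U} × (U ≃ₗ[K] U) :=
  (Equiv.subtypeUnivEquiv fun x => x.2.finrank_eq.symm).symm.trans <|
    (Equiv.subtypeSigmaEquiv _ _).trans <|
      (Equiv.sigmaCongrRight fun f =>
        let e := LinearEquiv.ofFinrankEq _ _ f.2
        { toFun := fun g => g.trans e
          invFun := fun g => g.trans e.symm
          left_inv := fun g => by ext; simp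
          right_inv := fun g => by ext; simp }).trans <|
      Equiv.sigmaEquivProd _ _

theorem card_finrank_range_mul_card_linearEquiv [FiniteDimensional K U] [FiniteDimensional K W] :
    Nat.card {f : V →ₗ[K] W // finrank K (range f) = finrank K U} * Nat.card (U ≃ₗ[K] U) =
      Nat.card {s : V →ₗ[K] U // Surjective s} * Nat.card {i : U →ₗ[K] W // Injective i} := by
  rw [← Nat.card_prod, ← Nat.card_prod]
  exact Nat.card_congr (sigmaRangeEquivFinrankProd.symm.trans sigmaRangeEquivSurjectiveProdInjective)

end LinearMap

section MatrixCount

variable {K : Type*} [Field K]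

theorem Matrix.surjective_mulVec_iff_linearIndependent_row {m n : Type*} [Fintype m] [Fintype n]
    (M : Matrix m n K) : Surjective M.mulVec ↔ LinearIndependent K M.row := by
  rw [← coe_mulVecLin, ← range_eq_top, linearIndependent_iff_card_eq_finrank_span, Set.finrank,
    ← rank_eq_finrank_span_row, Matrix.rank, Submodule.eq_top_iff_finrank_eq,
    finrank_fintype_fun_eq_card, eq_comm]

theorem card_subtype_mulVecLin {m n : ℕ} (P : ((Fin n → K) →ₗ[K] (Fin m → K)) → Prop) :
    Nat.card {M : Matrix (Fin m) (Fin n) K // P M.mulVecLin} = Nat.card {f // P f} :=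
  Nat.card_congr <| Equiv.subtypeEquiv Matrix.toLin'.toEquiv fun M => by
    rw [LinearEquiv.coe_toEquiv, Matrix.toLin'_apply']

variable [Fintype K]

local notation "q" => Fintype.card K

theorem card_injective_mulVecLin {m k : ℕ} (hk : k ≤ m) :
    Nat.card {M : Matrix (Fin m) (Fin k) K // Injective M.mulVecLin} =
      ∏ i ∈ range k, (q ^ m - q ^ i) := by
  calc _ = Nat.card {v : Fin k → Fin m → K // LinearIndependent K v} :=
        Nat.card_congr <| Equiv.subtypeEquiv (Matrix.transposeAddEquiv _ _ _).toEquiv fun M => by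
          rw [Matrix.coe_mulVecLin, Matrix.mulVec_injective_iff]; rfl
    _ = _ := by
      rw [card_linearIndependent (by simpa using hk), finrank_fin_fun,
        Fin.prod_univ_eq_prod_range (fun i => q ^ m - q ^ i)]

theorem card_surjective_mulVecLin {k n : ℕ} (hk : k ≤ n) :
    Nat.card {M : Matrix (Fin k) (Fin n) K // Surjective M.mulVecLin} =
      ∏ i ∈ range k, (q ^ n - q ^ i) := by
  calc _ = Nat.card {v : Fin k → Fin n → K // LinearIndependent K v} :=
        Nat.card_congr <| Equiv.subtypeEquiv Matrix.of.symm fun M => by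
          rw [Matrix.coe_mulVecLin, Matrix.surjective_mulVec_iff_linearIndependent_row]; rfl
    _ = _ := by
      rw [card_linearIndependent (by simpa using hk), finrank_fin_fun,
        Fin.prod_univ_eq_prod_range (fun i => q ^ n - q ^ i)]

theorem card_linearEquiv_pi (k : ℕ) :
    Nat.card ((Fin k → K) ≃ₗ[K] (Fin k → K)) = ∏ i ∈ range k, (q ^ k - q ^ i) := by
  rw [← Fin.prod_univ_eq_prod_range (fun i => q ^ k - q ^ i), ← Matrix.card_GL_field]
  exact Nat.card_congr (Matrix.GeneralLinearGroup.toLin.trans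
    (LinearMap.GeneralLinearGroup.generalLinearEquiv K (Fin k → K))).toEquiv.symm

theorem card_finrank_ker_mulVecLin_mul {n r j k : ℕ} (hjk : j + k = n) (hkr : k ≤ r) :
    Nat.card {M : Matrix (Fin r) (Fin n) K // finrank K (ker M.mulVecLin) = j} *
        ∏ i ∈ range k, (q ^ k - q ^ i) =
      (∏ i ∈ range k, (q ^ n - q ^ i)) * ∏ i ∈ range k, (q ^ r - q ^ i) := by
  have hker (f : (Fin n → K) →ₗ[K] (Fin r → K)) :
      finrank K (ker f) = j ↔ finrank K (range f) = finrank K (Fin k → K) := by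
    have := finrank_range_add_finrank_ker f
    simp only [finrank_fin_fun] at this ⊢
    omega
  rw [card_subtype_mulVecLin fun f => finrank K (ker f) = j,
    Nat.card_congr (Equiv.subtypeEquivRight hker), ← card_linearEquiv_pi,
    card_finrank_range_mul_card_linearEquiv,
    ← card_subtype_mulVecLin fun f => Surjective f, ← card_subtype_mulVecLin fun f => Injective f,
    card_surjective_mulVecLin (by omega), card_injective_mulVecLin hkr]

end MatrixCount

theorem Nat.cast_prod_range_pow_sub_pow {R : Type*} [CommRing R] {q a b : ℕ} (hq : 0 < q)
    (hba : b ≤ a) :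
    ((∏ i ∈ range b, (q ^ a - q ^ i) : ℕ) : R) = ∏ i ∈ range b, ((q : R) ^ a - (q : R) ^ i) := by
  rw [Nat.cast_prod]
  refine prod_congr rfl fun i hi => ?_
  rw [Nat.cast_sub (Nat.pow_le_pow_right hq (by simp at hi; omega))]
  push_cast
  rfl

section QPochhammer

variable {𝕜 : Type*} [Field 𝕜]

/-- The `q`-Pochhammer symbol `(x⁻¹; x⁻¹)_a = ∏_{i=1}^{a} (1 - x⁻ⁱ)`. -/
def qPochhammerInv (x : 𝕜) (a : ℕ) : 𝕜 := ∏ i ∈ range a, (1 - x ^ (-((i : ℤ) + 1)))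

@[simp] theorem qPochhammerInv_zero (x : 𝕜) : qPochhammerInv x 0 = 1 := prod_range_zero _

theorem qPochhammerInv_add (x : 𝕜) (a b : ℕ) :
    qPochhammerInv x (a + b) =
      qPochhammerInv x a * ∏ i ∈ range b, (1 - x ^ (-((i : ℤ) + 1) - a)) := by
  rw [qPochhammerInv, prod_range_add]
  congr 2 with i
  push_cast
  ring_nf

theorem qPochhammerInv_pos [LinearOrder 𝕜] [IsStrictOrderedRing 𝕜] {x : 𝕜} (hx : 1 < x) (a : ℕ) :
    0 < qPochhammerInv x a :=
  prod_pos fun _ _ => sub_pos.2 <| zpow_lt_one_of_neg₀ hx (by omega)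

theorem prod_range_pow_sub_pow_mul_qPochhammerInv {x : 𝕜} (hx : x ≠ 0) {a b : ℕ} (hba : b ≤ a) :
    (∏ i ∈ range b, (x ^ a - x ^ i)) * qPochhammerInv x (a - b) =
      x ^ (a * b) * qPochhammerInv x a := by
  induction b with
  | zero => simp
  | succ b ih =>
    set c := a - (b + 1)
    have hpow : x ^ a * x ^ (-((c : ℤ) + 1)) = x ^ b := by
      rw [← zpow_natCast, ← zpow_add₀ hx, ← zpow_natCast]
      congr 1
      omega
    have ih' := ih (by omega)
    rw [show a - b = c + 1 by omega, qPochhammerInv, prod_range_succ, ← qPochhammerInv] at ih'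
    rw [prod_range_succ, Nat.mul_succ, pow_add]
    linear_combination x ^ a * ih' + (∏ i ∈ range b, (x ^ a - x ^ i)) * qPochhammerInv x c * hpow

theorem mul_qPochhammerInv_eq_of_mul_prod_eq {x : 𝕜} (hx : x ≠ 0) {n j r d k : ℕ}
    (hjk : j + k = n) (hkd : k + d = r) {C : 𝕜}
    (hC : C * ∏ i ∈ range k, (x ^ k - x ^ i) =
      (∏ i ∈ range k, (x ^ n - x ^ i)) * ∏ i ∈ range k, (x ^ r - x ^ i)) :
    C * x ^ (j * d) * qPochhammerInv x j * qPochhammerInv x d * qPochhammerInv x k =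
      x ^ (r * n) * qPochhammerInv x n * qPochhammerInv x r := by
  have hn := prod_range_pow_sub_pow_mul_qPochhammerInv hx (a := n) (b := k) (by omega)
  have hr := prod_range_pow_sub_pow_mul_qPochhammerInv hx (a := r) (b := k) (by omega)
  have hk := prod_range_pow_sub_pow_mul_qPochhammerInv hx (a := k) (b := k) le_rfl
  rw [show n - k = j by omega] at hn
  rw [show r - k = d by omega] at hr
  rw [Nat.sub_self, qPochhammerInv_zero, mul_one] at hk
  have hpow : x ^ (j * d) * x ^ (n * k) * x ^ (r * k) = x ^ (k * k) * x ^ (r * n) := by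
    simp only [← pow_add]
    congr 1
    subst hjk hkd
    ring
  apply mul_left_cancel₀ (pow_ne_zero (k * k) hx)
  linear_combination (x ^ (j * d) * qPochhammerInv x j * qPochhammerInv x d) * hC
    - (x ^ (j * d) * C * qPochhammerInv x j * qPochhammerInv x d) * hk
    + (x ^ (j * d) * qPochhammerInv x d * ∏ i ∈ range k, (x ^ r - x ^ i)) * hn
    + (x ^ (j * d) * x ^ (n * k) * qPochhammerInv x n) * hr
    + (qPochhammerInv x n * qPochhammerInv x r) * hpow

end QPochhammer

theorem div_pow_eq_of_mul_prod_eq {x : ℝ} (hx : 1 < x) {n j r d k : ℕ} {u : ℤ} (hjk : j + k = n)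
    (hkd : k + d = r) (hd : (d : ℤ) = j - u) {C : ℝ}
    (hC : C * ∏ i ∈ range k, (x ^ k - x ^ i) =
      (∏ i ∈ range k, (x ^ n - x ^ i)) * ∏ i ∈ range k, (x ^ r - x ^ i)) :
    C / x ^ (r * n) =
      x ^ (-(j : ℤ) * ((j : ℤ) - u)) *
        (∏ m ∈ range d, (1 - x ^ (-((m : ℤ) + 1) - n + j)) / (1 - x ^ (-((m : ℤ) + 1)))) *
        (∏ m ∈ range j, (1 - x ^ (-((m : ℤ) + 1)))⁻¹) *
        ∏ m ∈ range n, (1 - x ^ (-((m : ℤ) + 1))) := by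
  have key := mul_qPochhammerInv_eq_of_mul_prod_eq (by positivity) hjk hkd hC
  have hsplit := qPochhammerInv_add x k d
  have hshift : ∏ m ∈ range d, (1 - x ^ (-((m : ℤ) + 1) - n + j)) =
      ∏ m ∈ range d, (1 - x ^ (-((m : ℤ) + 1) - k)) := by
    congr 1 with m
    congr 2
    omega
  have hexp : -(j : ℤ) * ((j : ℤ) - u) = -((j * d : ℕ) : ℤ) := by
    push_cast
    rw [hd]
    ring
  have hPj := (qPochhammerInv_pos hx j).ne'
  have hPd := (qPochhammerInv_pos hx d).ne'
  have key' : C * x ^ (j * d) * qPochhammerInv x j * qPochhammerInv x d =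
      x ^ (r * n) * qPochhammerInv x n * ∏ m ∈ range d, (1 - x ^ (-((m : ℤ) + 1) - k)) := by
    refine mul_right_cancel₀ (qPochhammerInv_pos hx k).ne' ?_
    rw [key, ← hkd, hsplit]
    ring
  rw [prod_div_distrib, prod_inv_distrib, hshift, hexp, zpow_neg, zpow_natCast]
  change _ = _ * (_ / qPochhammerInv x d) * (qPochhammerInv x j)⁻¹ * qPochhammerInv x n
  field_simp
  linear_combination key'

theorem stmt_0_general (ℓ : ℕ) [Fact (Nat.Prime ℓ)] (n j r d : ℕ) (u : ℤ)
    (hjn : j ≤ n) (hr : (r : ℤ) = (n : ℤ) - u)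
    (hd : (d : ℤ) = (j : ℤ) - u) :
    (Nat.card {M : Matrix (Fin r) (Fin n) (ZMod ℓ) //
        Module.finrank (ZMod ℓ) (LinearMap.ker M.mulVecLin) = j} : ℝ) /
      (Nat.card (Matrix (Fin r) (Fin n) (ZMod ℓ)) : ℝ) =
    (ℓ : ℝ) ^ (-(j : ℤ) * ((j : ℤ) - u)) *
      (∏ k ∈ Finset.range d,
        (1 - (ℓ : ℝ) ^ (-((k : ℤ) + 1) - (n : ℤ) + (j : ℤ))) /
          (1 - (ℓ : ℝ) ^ (-((k : ℤ) + 1)))) *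
      (∏ k ∈ Finset.range j, (1 - (ℓ : ℝ) ^ (-((k : ℤ) + 1)))⁻¹) *
      (∏ k ∈ Finset.range n, (1 - (ℓ : ℝ) ^ (-((k : ℤ) + 1)))) := by
  have hℓ := (Fact.out : ℓ.Prime).one_lt
  have : NeZero ℓ := ⟨by omega⟩
  obtain ⟨k, hjk⟩ : ∃ k, j + k = n := ⟨n - j, by omega⟩
  have hkd : k + d = r := by omega
  have hcount := congrArg (Nat.cast : ℕ → ℝ)
    (card_finrank_ker_mulVecLin_mul (K := ZMod ℓ) hjk (by omega : k ≤ r))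
  have hℓ0 : 0 < ℓ := by omega
  rw [ZMod.card, Nat.cast_mul, Nat.cast_mul, Nat.cast_prod_range_pow_sub_pow hℓ0 le_rfl,
    Nat.cast_prod_range_pow_sub_pow hℓ0 (by omega : k ≤ n),
    Nat.cast_prod_range_pow_sub_pow hℓ0 (by omega : k ≤ r)] at hcount
  have htotal : Nat.card (Matrix (Fin r) (Fin n) (ZMod ℓ)) = ℓ ^ (r * n) := by
    simp [Nat.card_eq_fintype_card, Matrix, ← pow_mul, mul_comm]
  rw [htotal, Nat.cast_pow]
  exact div_pow_eq_of_mul_prod_eq (by exact_mod_cast hℓ) hjk hkd hd hcount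

/-- The probability that a uniformly random `(n-u) × n` matrix over `𝔽_ℓ` has kernel
of dimension exactly `j`. Here `r` is the natural number with `(r : ℤ) = n - u` and
`d` the natural number with `(d : ℤ) = j - u`. -/
theorem stmt_0 (ℓ : ℕ) [Fact (Nat.Prime ℓ)] (n j r d : ℕ) (u : ℤ)
    (hjn : j ≤ n) (hju : u ≤ (j : ℤ)) (hr : (r : ℤ) = (n : ℤ) - u)
    (hd : (d : ℤ) = (j : ℤ) - u) :
    (Nat.card {M : Matrix (Fin r) (Fin n) (ZMod ℓ) //
        Module.finrank (ZMod ℓ) (LinearMap.ker M.mulVecLin) = j} : ℝ) /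
      (Nat.card (Matrix (Fin r) (Fin n) (ZMod ℓ)) : ℝ) =
    (ℓ : ℝ) ^ (-(j : ℤ) * ((j : ℤ) - u)) *
      (∏ k ∈ Finset.range d,
        (1 - (ℓ : ℝ) ^ (-((k : ℤ) + 1) - (n : ℤ) + (j : ℤ))) /
          (1 - (ℓ : ℝ) ^ (-((k : ℤ) + 1)))) *
      (∏ k ∈ Finset.range j, (1 - (ℓ : ℝ) ^ (-((k : ℤ) + 1)))⁻¹) *
      (∏ k ∈ Finset.range n, (1 - (ℓ : ℝ) ^ (-((k : ℤ) + 1)))) :=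
  stmt_0_general ℓ n j r d u hjn hr hd
end

section
/- Let n be a positive integer, let T be a uniformly random alternating n×n matrix over F_2, and let v_1, …, v_m ∈ F_2^n span a subspace of dimension d. Then the probability that T v_i = 0 for all i ≤ m equals 2^{−nd + d(d+1)/2}. -/
/-- An alternating matrix over `𝔽₂`: symmetric with zero diagonal. -/
def IsAlt2 {n : ℕ} (T : Matrix (Fin n) (Fin n) (ZMod 2)) : Prop :=
  T.IsSymm ∧ ∀ i, T i i = 0

/-!
In characteristic 2 a matrix is alternating (symmetric with zero diagonal) iff `xᵀ T x = 0` for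
all `x`, so the property survives every congruence `T ↦ Pᵀ T P`. Extend a basis of
`W = span v` to a basis `b` of `𝔽₂ⁿ` and conjugate by the matrix with columns `b`: the
condition `W ≤ ker T` becomes the vanishing of the first `d` columns, hence by symmetry of the
first `d` rows, and what remains is an arbitrary alternating `(n - d) × (n - d)` block. An
alternating matrix is a free choice of one entry per unordered pair of distinct indices, so the
ratio is `2 ^ C(n - d, 2) / 2 ^ C(n, 2)`, and `C(n, 2) - C(n - d, 2) = n d - d (d + 1) / 2`.
-/

open Module Submodule

theorem Module.Basis.sumExtend_apply_inl {ι K V : Type*} [DivisionRing K] [AddCommGroup V]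
    [Module K V] {v : ι → V} (hv : LinearIndependent K v) (i : ι) :
    Basis.sumExtend hv (Sum.inl i) = v i := by
  rw [Basis.sumExtend, Basis.reindex_apply, Basis.extend_apply_self]
  rfl

namespace Matrix

variable {ι κ n R : Type*}

-- Alternating in characteristic `2`, where symmetric and skew-symmetric agree.
def IsAlt [Zero R] (T : Matrix ι ι R) : Prop := T.IsSymm ∧ ∀ i, T i i = 0

section CharTwo

variable [Fintype ι] [Fintype κ] [CommRing R]

theorem dotProduct_transpose_mul_mul_mulVec (P : Matrix κ ι R) (T : Matrix κ κ R)
    (x : ι → R) :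
    x ⬝ᵥ (Pᵀ * T * P) *ᵥ x = (P *ᵥ x) ⬝ᵥ T *ᵥ (P *ᵥ x) := by
  rw [← mulVec_mulVec, ← mulVec_mulVec, dotProduct_mulVec, vecMul_transpose]

variable [CharP R 2]

theorem isAlt_iff_forall_dotProduct_mulVec_self {T : Matrix ι ι R} :
    T.IsAlt ↔ ∀ x, x ⬝ᵥ T *ᵥ x = 0 := by
  classical
  constructor
  · rintro ⟨hsymm, hdiag⟩ x
    have hsum : x ⬝ᵥ T *ᵥ x = ∑ p : ι × ι, x p.1 * T p.1 p.2 * x p.2 := by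
      simp [Fintype.sum_prod_type, dotProduct, mulVec, Finset.mul_sum, mul_assoc]
    rw [hsum]
    refine Finset.sum_ninvolution Prod.swap (fun p => ?_) (fun p hp hswap => ?_)
      (by simp) (by simp)
    · convert CharTwo.add_self_eq_zero (x p.1 * T p.1 p.2 * x p.2) using 2
      rw [Prod.fst_swap, Prod.snd_swap, hsymm.apply p.1 p.2]
      ring
    · obtain ⟨i, j⟩ := p
      obtain rfl : j = i := congrArg Prod.fst hswap
      simp [hdiag] at hp
  · intro h
    have hdiag : ∀ i, T i i = 0 := fun i => by simpa using h (Pi.single i 1)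
    refine ⟨IsSymm.ext fun i j => ?_, hdiag⟩
    have := h (Pi.single i 1 + Pi.single j 1)
    simp only [mulVec_add, add_dotProduct, dotProduct_add, mulVec_single_one] at this
    simpa [hdiag, CharTwo.add_eq_zero] using this

theorem IsAlt.transpose_mul_mul {T : Matrix κ κ R} (hT : T.IsAlt) (P : Matrix κ ι R) :
    (Pᵀ * T * P).IsAlt := by
  rw [isAlt_iff_forall_dotProduct_mulVec_self] at hT ⊢
  intro x
  rw [dotProduct_transpose_mul_mul_mulVec, hT]

end CharTwo

section Counting

variable [DecidableEq ι] [Zero R]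

def isAltEquivOffDiag :
    {T : Matrix ι ι R // T.IsAlt} ≃ ({z : Sym2 ι // ¬z.IsDiag} → R) where
  toFun T z := Sym2.lift ⟨(T.1 · ·), fun i j => (T.2.1.apply i j).symm⟩ z
  invFun f := ⟨of fun i j => if h : i = j then 0 else f ⟨s(i, j), by simpa⟩,
    IsSymm.ext fun i j => by
      by_cases h : i = j
      · simp [h]
      · simp [h, Ne.symm h, Sym2.eq_swap], fun i => by simp⟩
  left_inv T := by
    ext i j
    by_cases h : i = j
    · subst h; simp [T.2.2]
    · simp [h]
  right_inv f := by
    ext ⟨z, hz⟩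
    induction z using Sym2.ind with
    | _ i j => simp [show i ≠ j by simpa using hz]

theorem natCard_isAlt [Finite ι] :
    Nat.card {T : Matrix ι ι R // T.IsAlt} = Nat.card R ^ (Nat.card ι).choose 2 := by
  rw [Nat.card_congr isAltEquivOffDiag, Nat.card_fun, Sym2.natCard_subtype_not_diag]

end Counting

def isAltColZeroEquiv [Zero R] :
    {M : Matrix (ι ⊕ κ) (ι ⊕ κ) R // M.IsAlt ∧ ∀ i, M.col (Sum.inl i) = 0} ≃
      {S : Matrix κ κ R // S.IsAlt} where
  toFun M := ⟨M.1.toBlocks₂₂, M.2.1.1.submatrix _, fun i => M.2.1.2 _⟩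
  invFun S := ⟨fromBlocks 0 0 0 S.1,
    ⟨isSymm_zero.fromBlocks (by simp) S.2.1, by rintro (i | i) <;> simp [S.2.2]⟩,
    fun i => by ext (j | j) <;> simp⟩
  left_inv := by
    rintro ⟨M, ⟨hsymm, -⟩, hcol⟩
    have h : ∀ i a, M a (Sum.inl i) = 0 := fun i a => congrFun (hcol i) a
    ext (a | a) (b | b)
    · simp [h]
    · simp [← hsymm.apply (Sum.inl a) (Sum.inr b), h]
    · simp [h]
    · simp [toBlocks₂₂]
  right_inv S := rfl

section BasisChange

variable {m : Type*} [Fintype n] [Fintype m] [DecidableEq n] [CommRing R]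

theorem transpose_mul_transpose_mul_mul_mul {P : Matrix n m R} {Q : Matrix m n R}
    (hPQ : P * Q = 1) (T : Matrix n n R) : Qᵀ * (Pᵀ * T * P) * Q = T := by
  simp only [Matrix.mul_assoc]
  rw [hPQ, Matrix.mul_one, ← Matrix.mul_assoc, ← transpose_mul, hPQ, transpose_one,
    Matrix.one_mul]

def transposeMulMulEquiv [DecidableEq m] {P : Matrix n m R} {Q : Matrix m n R}
    (hPQ : P * Q = 1) (hQP : Q * P = 1) : Matrix n n R ≃ Matrix m m R where
  toFun T := Pᵀ * T * P
  invFun M := Qᵀ * M * Q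
  left_inv := transpose_mul_transpose_mul_mul_mul hPQ
  right_inv := transpose_mul_transpose_mul_mul_mul hQP

theorem isAlt_transpose_mul_mul_iff [CharP R 2] {P : Matrix n m R} {Q : Matrix m n R}
    (hPQ : P * Q = 1) {T : Matrix n n R} : (Pᵀ * T * P).IsAlt ↔ T.IsAlt :=
  ⟨fun h => transpose_mul_transpose_mul_mul_mul hPQ T ▸ h.transpose_mul_mul Q,
    fun h => h.transpose_mul_mul P⟩

theorem col_transpose_mul_mul_eq_zero_iff [DecidableEq m] {P : Matrix n m R} {Q : Matrix m n R}
    (hPQ : P * Q = 1) {T : Matrix n n R} (a : m) :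
    (Pᵀ * T * P).col a = 0 ↔ T *ᵥ P.col a = 0 := by
  rw [← mulVec_single_one, ← mulVec_mulVec, ← mulVec_mulVec, mulVec_single_one]
  refine ⟨fun h => ?_, fun h => by rw [h, mulVec_zero]⟩
  rw [← one_mulVec (T *ᵥ P.col a), ← transpose_one, ← hPQ, transpose_mul, ← mulVec_mulVec,
    h, mulVec_zero]

variable [DecidableEq ι] [DecidableEq κ] [Fintype ι] [Fintype κ] [CharP R 2]

-- `P` has the vectors of `b` as columns, so `Pᵀ * T * P` is the Gram matrix of `T` in `b`.
noncomputable def isAltBasisEquiv (b : Basis (ι ⊕ κ) R (n → R)) :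
    {T : Matrix n n R // T.IsAlt ∧ ∀ i, T *ᵥ b (Sum.inl i) = 0} ≃
      {M : Matrix (ι ⊕ κ) (ι ⊕ κ) R // M.IsAlt ∧ ∀ i, M.col (Sum.inl i) = 0} :=
  let P := (Pi.basisFun R n).toMatrix b
  have hPQ : P * b.toMatrix (Pi.basisFun R n) = 1 := (Pi.basisFun R n).toMatrix_mul_toMatrix_flip b
  have hcol : ∀ a, P.col a = b a := fun a => by ext; simp [P, Basis.toMatrix_apply]
  (transposeMulMulEquiv hPQ (b.toMatrix_mul_toMatrix_flip _)).subtypeEquiv fun T => by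
    simp only [transposeMulMulEquiv, Equiv.coe_fn_mk, isAlt_transpose_mul_mul_iff hPQ,
      col_transpose_mul_mul_eq_zero_iff hPQ, hcol]

end BasisChange

theorem natCard_isAlt_le_ker {K : Type*} [Field K] [CharP K 2] [Fintype n] [DecidableEq n]
    (W : Submodule K (n → K)) :
    Nat.card {T : Matrix n n K // T.IsAlt ∧ W ≤ LinearMap.ker T.mulVecLin} =
      Nat.card K ^ (Fintype.card n - finrank K W).choose 2 := by
  classical
  let w : Fin (finrank K W) → n → K := W.subtype ∘ Module.finBasis K W
  have hw : LinearIndependent K w := (Module.finBasis K W).linearIndependent.map' _ W.ker_subtype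
  have hspan : span K (Set.range w) = W := by
    rw [Set.range_comp, span_image, (Module.finBasis K W).span_eq, map_subtype_top]
  let b := Basis.sumExtend hw
  have := Module.Finite.finite_basis b
  have := Finite.sum_right (Fin (finrank K W)) (β := Basis.sumExtendIndex hw)
  let := Fintype.ofFinite (Basis.sumExtendIndex hw)
  have hcard : Nat.card (Basis.sumExtendIndex hw) = Fintype.card n - finrank K W := by
    have := finrank_eq_card_basis b
    rw [finrank_fintype_fun_eq_card, Fintype.card_sum, Fintype.card_fin] at this
    rw [Nat.card_eq_fintype_card]
    omega
  calc Nat.card {T : Matrix n n K // T.IsAlt ∧ W ≤ LinearMap.ker T.mulVecLin}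
      = Nat.card {T : Matrix n n K // T.IsAlt ∧ ∀ i, T *ᵥ b (Sum.inl i) = 0} := by
        refine Nat.card_congr (Equiv.subtypeEquivRight fun T => and_congr_right' ?_)
        simp [← hspan, span_le, Set.range_subset_iff, b, Basis.sumExtend_apply_inl]
    _ = Nat.card {S : Matrix (Basis.sumExtendIndex hw) (Basis.sumExtendIndex hw) K // S.IsAlt} :=
        Nat.card_congr ((isAltBasisEquiv b).trans isAltColZeroEquiv)
    _ = _ := by rw [natCard_isAlt, hcard]

end Matrix

theorem Nat.choose_two_sub_add_mul {n d : ℕ} (h : d ≤ n) :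
    (n - d).choose 2 + n * d = n.choose 2 + d * (d + 1) / 2 := by
  obtain ⟨k, rfl⟩ := Nat.exists_eq_add_of_le h
  rw [Nat.add_sub_cancel_left, show d * (d + 1) / 2 = (d + 1).choose 2 by
    rw [Nat.choose_two_right, Nat.add_sub_cancel, mul_comm]]
  apply Nat.cast_injective (R := ℚ)
  push_cast [Nat.cast_choose_two]
  ring

open Matrix

theorem stmt_4_general (n m d : ℕ) (v : Fin m → (Fin n → ZMod 2))
    (hd : Module.finrank (ZMod 2) (Submodule.span (ZMod 2) (Set.range v)) = d) :
    (Nat.card {T : Matrix (Fin n) (Fin n) (ZMod 2) //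
        IsAlt2 T ∧ ∀ i, T.mulVec (v i) = 0} : ℝ) /
      (Nat.card {T : Matrix (Fin n) (Fin n) (ZMod 2) // IsAlt2 T} : ℝ) =
    (2 : ℝ) ^ (((d * (d + 1) / 2 : ℕ) : ℤ) - ((n * d : ℕ) : ℤ)) := by
  set W := span (ZMod 2) (Set.range v)
  have hdn : d ≤ n := by simpa [hd] using W.finrank_le
  have hnum : Nat.card {T : Matrix (Fin n) (Fin n) (ZMod 2) //
      IsAlt2 T ∧ ∀ i, T *ᵥ v i = 0} = 2 ^ (n - d).choose 2 := by
    have hker (T : Matrix (Fin n) (Fin n) (ZMod 2)) :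
        (∀ i, T *ᵥ v i = 0) ↔ W ≤ LinearMap.ker T.mulVecLin := by
      simp [W, span_le, Set.range_subset_iff]
    simpa [IsAlt2, IsAlt, hker, hd] using natCard_isAlt_le_ker W
  have hden : Nat.card {T : Matrix (Fin n) (Fin n) (ZMod 2) // IsAlt2 T} = 2 ^ n.choose 2 := by
    simpa [IsAlt2, IsAlt] using natCard_isAlt (R := ZMod 2) (ι := Fin n)
  rw [hnum, hden, zpow_sub₀ two_ne_zero, zpow_natCast, zpow_natCast,
    div_eq_div_iff (by positivity) (by positivity)]
  push_cast
  rw [← pow_add, ← pow_add, Nat.choose_two_sub_add_mul hdn, add_comm]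

/-- For a uniformly random alternating `n × n` matrix `T` over `𝔽₂` and vectors
`v_1, …, v_m` spanning a subspace of dimension `d`, the probability that `T vᵢ = 0`
for all `i` equals `2^{−nd + d(d+1)/2}`. -/
theorem stmt_4 (n m d : ℕ) (hn : 1 ≤ n) (v : Fin m → (Fin n → ZMod 2))
    (hd : Module.finrank (ZMod 2) (Submodule.span (ZMod 2) (Set.range v)) = d) :
    (Nat.card {T : Matrix (Fin n) (Fin n) (ZMod 2) //
        IsAlt2 T ∧ ∀ i, T.mulVec (v i) = 0} : ℝ) /
      (Nat.card {T : Matrix (Fin n) (Fin n) (ZMod 2) // IsAlt2 T} : ℝ) =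
    (2 : ℝ) ^ (((d * (d + 1) / 2 : ℕ) : ℤ) - ((n * d : ℕ) : ℤ)) :=
  stmt_4_general n m d v hd
end

section
/- Fix a prime ℓ and an integer m ≥ 0, and for each n let P(j|n) denote the probability that a uniformly random alternating n×n matrix over F_2 has kernel of dimension j (with ℓ = 2). Then lim_{n→∞} Σ_{j=0}^{n} 2^{mj} · P(j|n) = Σ_{j=0}^{m} gr_2(j, m) · 2^{j(j+1)/2}, where gr_2(j, m) is the number of j-dimensional subspaces of F_2^m. -/
/-!
Since `2 ^ (m * dim ker T)` is the number of `m`-tuples `v` of vectors in `ker T`, the sum is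
`2 ^ -(n choose 2)` times the number of pairs `(T, v)` with `T` alternating and
`span v ≤ ker T`. Counting over `v` first: alternating `T` killing a subspace of dimension `r`
are, after a change of basis, the alternating matrices whose columns at `r` fixed indices vanish,
so there are `2 ^ ((n - r) choose 2)` of them. Group the tuples by their span `W`, of dimension
`r ≤ m`. The `m`-tuples spanning a given `W` correspond to the linearly independent `r`-tuples
of `𝔽₂ ^ m` (the rows of the `r × m` coordinate matrix), and `gr₂(r, n)` is
`∏ i < r, (2 ^ n - 2 ^ i) / ∏ i < r, (2 ^ r - 2 ^ i)`. As
`r * n + (n - r) choose 2 = (r + 1) choose 2 + n choose 2`, the `r`-th term tends to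
`gr₂(r, m) * 2 ^ (r * (r + 1) / 2)`.
-/

open Finset Matrix Module Filter Topology

namespace Matrix

section Alternating

-- In characteristic 2, symmetric matrices with zero diagonal are exactly the alternating ones.
variable {ι R : Type*} [Fintype ι] [DecidableEq ι] [Zero R]

def alternatingEquivSym2 :
    {T : Matrix ι ι R // T.IsSymm ∧ ∀ i, T i i = 0} ≃ ({z : Sym2 ι // ¬z.IsDiag} → R) where
  toFun T z := Sym2.lift ⟨T.1, fun i j => congrFun (congrFun T.2.1 j) i⟩ z
  invFun f := ⟨of fun i j => if h : i = j then 0 else f ⟨s(i, j), by simpa using h⟩, by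
    refine ⟨?_, fun i => dif_pos rfl⟩
    ext i j
    by_cases h : i = j
    · subst h; rfl
    · simp [h, Ne.symm h, Sym2.eq_swap]⟩
  left_inv T := by
    ext i j
    by_cases h : i = j
    · subst h; simp [T.2.2]
    · simp [h]
  right_inv f := by
    ext ⟨z, hz⟩
    induction z using Sym2.ind with
    | h i j =>
      have h : i ≠ j := by simpa using hz
      simp [h]

theorem card_alternating [Finite R] :
    Nat.card {T : Matrix ι ι R // T.IsSymm ∧ ∀ i, T i i = 0} =
      Nat.card R ^ (Fintype.card ι).choose 2 := by
  rw [Nat.card_congr alternatingEquivSym2, Nat.card_fun,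
    Nat.card_eq_fintype_card (α := {z : Sym2 ι // _}), Sym2.card_subtype_not_diag]

def alternatingRestrictEquiv (s : Finset ι) :
    {T : Matrix ι ι R // (T.IsSymm ∧ ∀ i, T i i = 0) ∧ ∀ k ∈ s, ∀ j, T j k = 0} ≃
      {S : Matrix {i // i ∉ s} {i // i ∉ s} R // S.IsSymm ∧ ∀ i, S i i = 0} where
  toFun T := ⟨T.1.submatrix Subtype.val Subtype.val,
    ⟨by rw [IsSymm, transpose_submatrix, T.2.1.1], fun i => T.2.1.2 i⟩⟩
  invFun S := ⟨of fun i j => if h : i ∉ s ∧ j ∉ s then S.1 ⟨i, h.1⟩ ⟨j, h.2⟩ else 0, by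
    refine ⟨⟨?_, fun i => ?_⟩, fun k hk j => dif_neg fun h => h.2 hk⟩
    · ext i j
      simp only [transpose_apply, of_apply]
      by_cases h : i ∉ s ∧ j ∉ s
      · rw [dif_pos h, dif_pos h.symm]; exact congrFun (congrFun S.2.1 _) _
      · rw [dif_neg h, dif_neg fun h' => h h'.symm]
    · simp only [of_apply]
      split_ifs
      · exact S.2.2 _
      · rfl⟩
  left_inv T := by
    ext i j
    simp only [of_apply]
    split_ifs with h
    · rfl
    · rw [not_and_or, not_not, not_not] at h
      rcases h with hi | hj
      · rw [← T.2.1.1.apply i j]; exact (T.2.2 i hi j).symm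
      · exact (T.2.2 j hj i).symm
  right_inv S := by
    ext i j
    simp [i.2, j.2]

theorem card_alternating_of_forall_mem_eq_zero [Finite R] (s : Finset ι) :
    Nat.card {T : Matrix ι ι R // (T.IsSymm ∧ ∀ i, T i i = 0) ∧ ∀ k ∈ s, ∀ j, T j k = 0} =
      Nat.card R ^ (Fintype.card ι - #s).choose 2 := by
  rw [Nat.card_congr (alternatingRestrictEquiv s), card_alternating, Fintype.card_subtype_compl,
    Fintype.card_coe]

end Alternating

section Congruence

variable {ι R : Type*} [Fintype ι] [CommRing R]

theorem dotProduct_transpose_mul_mul_mulVec_self (A T : Matrix ι ι R) (x : ι → R) :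
    x ⬝ᵥ (Aᵀ * T * A) *ᵥ x = (A *ᵥ x) ⬝ᵥ T *ᵥ (A *ᵥ x) := by
  rw [← mulVec_mulVec, ← mulVec_mulVec, dotProduct_mulVec, vecMul_transpose]

variable [DecidableEq ι]

theorem forall_dotProduct_mulVec_self_eq_zero_iff [CharP R 2] {T : Matrix ι ι R} :
    (∀ x, x ⬝ᵥ T *ᵥ x = 0) ↔ T.IsSymm ∧ ∀ i, T i i = 0 := by
  have entry (i j : ι) : Pi.single i 1 ⬝ᵥ T *ᵥ Pi.single j 1 = T i j := by simp
  refine ⟨fun h => ⟨?_, fun i => entry i i ▸ h _⟩, fun ⟨hsymm, hdiag⟩ x => ?_⟩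
  · ext i j
    have hij := h (Pi.single i 1 + Pi.single j 1)
    rw [mulVec_add, dotProduct_add, add_dotProduct, add_dotProduct, entry, entry, entry, entry,
      ← entry i i, ← entry j j, h, h, zero_add, add_zero, CharTwo.add_eq_zero] at hij
    exact hij
  · simp only [dotProduct, mulVec, mul_sum, ← Fintype.sum_prod_type']
    -- the terms at `(i, j)` and `(j, i)` cancel, and the diagonal terms vanish
    refine sum_involution (fun p _ => p.swap) (fun p _ => ?_) (fun p _ hp hswap => hp ?_)
      (fun p _ => mem_univ _) (fun p _ => Prod.swap_swap p)
    · rw [Prod.fst_swap, Prod.snd_swap, hsymm.apply p.1 p.2, CharTwo.add_eq_zero]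
      ring
    · obtain ⟨i, j⟩ := p
      obtain rfl : j = i := congrArg Prod.fst hswap
      rw [hdiag, zero_mul, mul_zero]

def congruenceEquiv (u : (Matrix ι ι R)ˣ) : Matrix ι ι R ≃ Matrix ι ι R where
  toFun T := (u : Matrix ι ι R)ᵀ * T * u
  invFun T := (↑u⁻¹ : Matrix ι ι R)ᵀ * T * ↑u⁻¹
  left_inv T := by
    simp only [← Matrix.mul_assoc, ← transpose_mul, Units.mul_inv, transpose_one, Matrix.one_mul]
    rw [Matrix.mul_assoc, Units.mul_inv, Matrix.mul_one]
  right_inv T := by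
    simp only [← Matrix.mul_assoc, ← transpose_mul, Units.inv_mul, transpose_one, Matrix.one_mul]
    rw [Matrix.mul_assoc, Units.inv_mul, Matrix.mul_one]

theorem congruenceEquiv_apply (u : (Matrix ι ι R)ˣ) (T : Matrix ι ι R) :
    congruenceEquiv u T = (u : Matrix ι ι R)ᵀ * T * u := rfl

theorem ker_congruenceEquiv (u : (Matrix ι ι R)ˣ) (T : Matrix ι ι R) :
    LinearMap.ker (congruenceEquiv u T).mulVecLin =
      (LinearMap.ker T.mulVecLin).comap (u : Matrix ι ι R).mulVecLin := by
  ext x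
  have hinj := mulVec_injective_of_isUnit ((isUnit_transpose _).2 u.isUnit)
  simp only [LinearMap.mem_ker, Submodule.mem_comap, mulVecLin_apply, congruenceEquiv_apply,
    ← mulVec_mulVec]
  exact ⟨fun h => hinj (h.trans (mulVec_zero _).symm), fun h => by rw [h, mulVec_zero]⟩

theorem isSymm_and_diag_eq_zero_congruenceEquiv_iff [CharP R 2] (u : (Matrix ι ι R)ˣ)
    (T : Matrix ι ι R) :
    ((congruenceEquiv u T).IsSymm ∧ ∀ i, congruenceEquiv u T i i = 0) ↔
      T.IsSymm ∧ ∀ i, T i i = 0 := by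
  simp only [← forall_dotProduct_mulVec_self_eq_zero_iff, congruenceEquiv_apply,
    dotProduct_transpose_mul_mul_mulVec_self]
  exact ((mulVec_surjective_iff_isUnit.2 u.isUnit).forall (p := fun y => y ⬝ᵥ T *ᵥ y = 0)).symm

theorem exists_units_mulVecLin_eq (e : (ι → R) ≃ₗ[R] (ι → R)) :
    ∃ u : (Matrix ι ι R)ˣ, (u : Matrix ι ι R).mulVecLin = e := by
  refine ⟨GeneralLinearGroup.toLin.symm
    ((LinearMap.GeneralLinearGroup.generalLinearEquiv R _).symm e), ?_⟩
  rw [← GeneralLinearGroup.coe_toLin, MulEquiv.apply_symm_apply,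
    ← LinearMap.GeneralLinearGroup.generalLinearEquiv_to_linearMap, MulEquiv.apply_symm_apply]

theorem card_alternating_map_le_ker [CharP R 2] (e : (ι → R) ≃ₗ[R] (ι → R))
    (W : Submodule R (ι → R)) :
    Nat.card {T : Matrix ι ι R // (T.IsSymm ∧ ∀ i, T i i = 0) ∧
        W.map (e : (ι → R) →ₗ[R] (ι → R)) ≤ LinearMap.ker T.mulVecLin} =
      Nat.card {T : Matrix ι ι R //
        (T.IsSymm ∧ ∀ i, T i i = 0) ∧ W ≤ LinearMap.ker T.mulVecLin} := by
  obtain ⟨u, hu⟩ := exists_units_mulVecLin_eq e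
  refine Nat.card_congr (Equiv.subtypeEquiv (congruenceEquiv u) fun T => ?_)
  rw [isSymm_and_diag_eq_zero_congruenceEquiv_iff, ker_congruenceEquiv,
    ← Submodule.map_le_iff_le_comap, hu]

end Congruence

end Matrix

theorem Submodule.exists_linearEquiv_map_eq {K V : Type*} [DivisionRing K] [AddCommGroup V]
    [Module K V] [FiniteDimensional K V] {S W : Submodule K V} (h : finrank K S = finrank K W) :
    ∃ e : V ≃ₗ[K] V, S.map (e : V →ₗ[K] V) = W := by
  obtain ⟨S', hS⟩ := S.exists_isCompl
  obtain ⟨W', hW⟩ := W.exists_isCompl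
  have h' : finrank K S' = finrank K W' := by
    have := finrank_add_eq_of_isCompl hS
    have := finrank_add_eq_of_isCompl hW
    omega
  let e := (prodEquivOfIsCompl S S' hS).symm ≪≫ₗ
    ((LinearEquiv.ofFinrankEq S W h).prodCongr (LinearEquiv.ofFinrankEq S' W' h')) ≪≫ₗ
    prodEquivOfIsCompl W W' hW
  have hle : S.map (e : V →ₗ[K] V) ≤ W := by
    rintro _ ⟨x, hx, rfl⟩
    have hx' : (prodEquivOfIsCompl S S' hS).symm x = ((⟨x, hx⟩ : ↥S), 0) :=
      prodEquivOfIsCompl_symm_apply_left (h := hS) (x := ⟨x, hx⟩)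
    simp [e, hx']
  exact ⟨e, eq_of_le_of_finrank_eq hle (by rw [LinearEquiv.finrank_map_eq, h])⟩

section CoordinateSubspace

variable {K ι : Type*} [Field K] [Fintype ι] [DecidableEq ι]

theorem finrank_span_range_single (s : Finset ι) :
    finrank K (Submodule.span K (Set.range fun i : s => (Pi.single (i : ι) 1 : ι → K))) = #s := by
  have hli : LinearIndependent K fun i : s => (Pi.single (i : ι) 1 : ι → K) := by
    simpa [Function.comp_def] using
      (Pi.basisFun K ι).linearIndependent.comp _ Subtype.val_injective
  rw [finrank_span_eq_card hli, Fintype.card_coe]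

theorem span_range_single_le_ker_iff (s : Finset ι) (T : Matrix ι ι K) :
    Submodule.span K (Set.range fun i : s => (Pi.single (i : ι) 1 : ι → K)) ≤
        LinearMap.ker T.mulVecLin ↔ ∀ k ∈ s, ∀ j, T j k = 0 := by
  simp [Submodule.span_le, Set.range_subset_iff, funext_iff]

theorem Matrix.card_alternating_le_ker [Fintype K] [CharP K 2] (W : Submodule K (ι → K)) :
    Nat.card {T : Matrix ι ι K // (T.IsSymm ∧ ∀ i, T i i = 0) ∧ W ≤ LinearMap.ker T.mulVecLin} =
      Fintype.card K ^ (Fintype.card ι - finrank K W).choose 2 := by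
  obtain ⟨s, -, hs⟩ := exists_subset_card_eq (s := (univ : Finset ι)) (n := finrank K W)
    (by simpa using W.finrank_le)
  obtain ⟨e, rfl⟩ := Submodule.exists_linearEquiv_map_eq (W := W)
    ((finrank_span_range_single s).trans hs)
  rw [card_alternating_map_le_ker, LinearEquiv.finrank_map_eq, finrank_span_range_single,
    ← Nat.card_eq_fintype_card, ← card_alternating_of_forall_mem_eq_zero s]
  simp_rw [span_range_single_le_ker_iff]

end CoordinateSubspace

def indepTupleCount (q m r : ℕ) : ℕ := ∏ i : Fin r, (q ^ m - q ^ (i : ℕ))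

section Tuples

variable {K V : Type*} [Field K] [AddCommGroup V] [Module K V]

theorem span_range_eq_top_iff_linearIndependent_swap {ι κ : Type*} [Fintype ι] [Fintype κ]
    (v : ι → κ → K) :
    Submodule.span K (Set.range v) = ⊤ ↔ LinearIndependent K fun k i => v i k := by
  have hrank := (rank_eq_finrank_span_cols (of fun k i => v i k)).symm.trans
    (rank_eq_finrank_span_row (of fun k i => v i k))
  rw [Submodule.eq_top_iff_finrank_eq, linearIndependent_iff_card_eq_finrank_span, Set.finrank,
    finrank_fintype_fun_eq_card]
  exact ⟨fun h => h.symm.trans hrank, fun h => hrank.trans h.symm⟩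

theorem span_range_coe_eq_map {m : ℕ} {W : Submodule K V} (w : Fin m → W) :
    Submodule.span K (Set.range fun i => (w i : V)) =
      (Submodule.span K (Set.range w)).map W.subtype := by
  rw [Submodule.map_span, ← Set.range_comp]
  rfl

def spanEqSubtypeEquiv {m : ℕ} (W : Submodule K V) :
    {v : Fin m → V // Submodule.span K (Set.range v) = W} ≃
      {w : Fin m → W // Submodule.span K (Set.range w) = ⊤} where
  toFun v := ⟨fun i => ⟨v.1 i, v.2.le (Submodule.subset_span (Set.mem_range_self i))⟩,
    Submodule.map_injective_of_injective W.injective_subtype <| by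
      rw [← span_range_coe_eq_map, Submodule.map_top, Submodule.range_subtype]
      exact v.2⟩
  invFun w := ⟨fun i => w.1 i, by
    rw [span_range_coe_eq_map, w.2, Submodule.map_top, Submodule.range_subtype]⟩
  left_inv v := rfl
  right_inv w := rfl

theorem span_range_comp_linearEquiv_eq_top_iff {M ι : Type*} [AddCommGroup M] [Module K M]
    (f : V ≃ₗ[K] M) (w : ι → V) :
    Submodule.span K (Set.range (f ∘ w)) = ⊤ ↔ Submodule.span K (Set.range w) = ⊤ := by
  rw [Set.range_comp, ← LinearEquiv.coe_coe, Submodule.span_image, Submodule.map_eq_top_iff]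

variable [Fintype K]

theorem card_span_range_eq_top_pi {m r : ℕ} (hr : r ≤ m) :
    Nat.card {v : Fin m → Fin r → K // Submodule.span K (Set.range v) = ⊤} =
      indepTupleCount (Fintype.card K) m r := by
  rw [Nat.card_congr (Equiv.subtypeEquiv (q := fun u : Fin r → Fin m → K => LinearIndependent K u)
    (Equiv.piComm _) span_range_eq_top_iff_linearIndependent_swap),
    card_linearIndependent (by simpa using hr)]
  simp [indepTupleCount]

variable [FiniteDimensional K V]

theorem card_span_range_eq (W : Submodule K V) {m : ℕ} (h : finrank K W ≤ m) :
    Nat.card {v : Fin m → V // Submodule.span K (Set.range v) = W} =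
      indepTupleCount (Fintype.card K) m (finrank K W) := by
  let f : W ≃ₗ[K] (Fin (finrank K W) → K) := LinearEquiv.ofFinrankEq _ _ (by simp)
  rw [Nat.card_congr ((spanEqSubtypeEquiv W).trans (Equiv.subtypeEquiv
    (q := fun u : Fin m → Fin (finrank K W) → K => Submodule.span K (Set.range u) = ⊤)
    (Equiv.piCongrRight fun _ => f.toEquiv)
    fun w => (span_range_comp_linearEquiv_eq_top_iff f w).symm)), card_span_range_eq_top_pi h]

theorem card_finrank_span_range_eq {m r : ℕ} (hr : r ≤ m) :
    Nat.card {v : Fin m → V // finrank K (Submodule.span K (Set.range v)) = r} =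
      Nat.card {W : Submodule K V // finrank K W = r} * indepTupleCount (Fintype.card K) m r := by
  classical
  have : Finite V := Module.finite_of_finite K
  have : Fintype {W : Submodule K V // finrank K W = r} := Fintype.ofFinite _
  let π : {v : Fin m → V // finrank K (Submodule.span K (Set.range v)) = r} →
      {W : Submodule K V // finrank K W = r} := fun v => ⟨_, v.2⟩
  have hfibre (W : {W : Submodule K V // finrank K W = r}) :
      Nat.card {v // π v = W} = indepTupleCount (Fintype.card K) m r := by
    obtain ⟨W, rfl⟩ := W
    rw [← card_span_range_eq W hr]
    exact Nat.card_congr ((Equiv.subtypeEquivRight fun v => Subtype.ext_iff).trans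
      (Equiv.subtypeSubtypeEquivSubtype (q := fun v => Submodule.span K (Set.range v) = W)
        fun hv => by rw [hv]))
  rw [← Nat.card_congr (Equiv.sigmaFiberEquiv π), Nat.card_sigma]
  simp [hfibre, Nat.card_eq_fintype_card]

theorem card_finrank_eq_mul_indepTupleCount {r : ℕ} (hr : r ≤ finrank K V) :
    Nat.card {W : Submodule K V // finrank K W = r} * indepTupleCount (Fintype.card K) r r =
      indepTupleCount (Fintype.card K) (finrank K V) r := by
  have : Finite V := Module.finite_of_finite K
  rw [← card_finrank_span_range_eq le_rfl]
  refine (Nat.card_congr (Equiv.subtypeEquivRight fun v => ?_)).trans (card_linearIndependent hr)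
  rw [linearIndependent_iff_card_eq_finrank_span, Fintype.card_fin, eq_comm, Set.finrank]

theorem card_span_range_le (P : Submodule K V) (m : ℕ) :
    Nat.card {v : Fin m → V // Submodule.span K (Set.range v) ≤ P} =
      Fintype.card K ^ (m * finrank K P) := by
  rw [Nat.card_congr ((Equiv.subtypeEquivRight fun v => by
      rw [Submodule.span_le, Set.range_subset_iff]; rfl).trans
      (Equiv.subtypePiEquivPi (p := fun _ x => x ∈ P))),
    Nat.card_fun, Module.natCard_eq_pow_finrank (K := K), Nat.card_eq_fintype_card,
    Nat.card_fin, ← pow_mul, mul_comm]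

end Tuples

theorem Finset.sum_comp_eq_sum_card_filter_smul {α β M : Type*} [DecidableEq β]
    [AddCommMonoid M] (s : Finset α) {t : Finset β} {g : α → β} (h : ∀ a ∈ s, g a ∈ t)
    (f : β → M) :
    ∑ a ∈ s, f (g a) = ∑ b ∈ t, #{a ∈ s | g a = b} • f b := by
  calc ∑ a ∈ s, f (g a) = ∑ a ∈ s with g a ∈ t, f (g a) := by rw [filter_true_of_mem h]
    _ = ∑ b ∈ t, ∑ a ∈ s with g a = b, f b := (sum_fiberwise_eq_sum_filter' _ _ _ _).symm
    _ = ∑ b ∈ t, #{a ∈ s | g a = b} • f b := by simp only [sum_const]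

theorem Matrix.sum_pow_mul_card_alternating_finrank_ker_eq {K ι : Type*} [Field K] [Fintype K]
    [CharP K 2] [Fintype ι] [DecidableEq ι] (m : ℕ) :
    ∑ j ∈ range (Fintype.card ι + 1), Fintype.card K ^ (m * j) *
        Nat.card {T : Matrix ι ι K //
          (T.IsSymm ∧ ∀ i, T i i = 0) ∧ finrank K (LinearMap.ker T.mulVecLin) = j} =
      ∑ r ∈ range (m + 1),
        Nat.card {v : Fin m → ι → K // finrank K (Submodule.span K (Set.range v)) = r} *
          Fintype.card K ^ (Fintype.card ι - r).choose 2 := by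
  classical
  set q := Fintype.card K
  set alt : Finset (Matrix ι ι K) := {T | T.IsSymm ∧ ∀ i, T i i = 0}
  have hker (T : Matrix ι ι K) : q ^ (m * finrank K (LinearMap.ker T.mulVecLin)) =
      #{v : Fin m → ι → K | Submodule.span K (Set.range v) ≤ LinearMap.ker T.mulVecLin} := by
    rw [← card_span_range_le, Nat.card_eq_fintype_card, Fintype.card_subtype]
  calc _ = ∑ T ∈ alt, q ^ (m * finrank K (LinearMap.ker T.mulVecLin)) := by
        rw [sum_comp_eq_sum_card_filter_smul alt (t := range (Fintype.card ι + 1))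
          (g := fun T => finrank K (LinearMap.ker T.mulVecLin)) ?_ (fun j => q ^ (m * j))]
        · simp [alt, filter_filter, Nat.card_eq_fintype_card, Fintype.card_subtype, mul_comm]
        · intro T _
          simpa [Nat.lt_succ_iff] using (LinearMap.ker T.mulVecLin).finrank_le
    _ = ∑ T ∈ alt,
          #{v : Fin m → ι → K | Submodule.span K (Set.range v) ≤ LinearMap.ker T.mulVecLin} := by
        simp only [hker]
    _ = ∑ v : Fin m → ι → K,
          #{T ∈ alt | Submodule.span K (Set.range v) ≤ LinearMap.ker T.mulVecLin} :=
        sum_card_bipartiteAbove_eq_sum_card_bipartiteBelow _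
    _ = ∑ v : Fin m → ι → K,
          q ^ (Fintype.card ι - finrank K (Submodule.span K (Set.range v))).choose 2 := by
        refine sum_congr rfl fun v _ => ?_
        rw [← card_alternating_le_ker, Nat.card_eq_fintype_card, Fintype.card_subtype,
          filter_filter]
    _ = _ := by
        rw [sum_comp_eq_sum_card_filter_smul univ (t := range (m + 1))
          (g := fun v => finrank K (Submodule.span K (Set.range v))) ?_
          (fun r => q ^ (Fintype.card ι - r).choose 2)]
        · simp [Nat.card_eq_fintype_card, Fintype.card_subtype]
        · intro v _
          simpa [Nat.lt_succ_iff, Set.finrank] using finrank_range_le_card (R := K) v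

theorem Nat.mul_add_choose_two_sub {r n : ℕ} (h : r ≤ n) :
    r * n + (n - r).choose 2 = (r + 1).choose 2 + n.choose 2 := by
  obtain ⟨a, rfl⟩ := Nat.exists_eq_add_of_le h
  apply Nat.cast_injective (R := ℚ)
  push_cast [Nat.add_sub_cancel_left, Nat.cast_choose_two]
  ring

theorem tendsto_indepTupleCount_div_pow {q : ℕ} (hq : 1 < q) (r : ℕ) :
    Tendsto (fun n => (indepTupleCount q n r : ℝ) / (q : ℝ) ^ (r * n)) atTop (𝓝 1) := by
  have hq' : (1 : ℝ) < q := by exact_mod_cast hq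
  have hfactor (i : Fin r) :
      Tendsto (fun n => 1 - (q : ℝ) ^ (i : ℕ) / (q : ℝ) ^ n) atTop (𝓝 1) := by
    simpa using tendsto_const_nhds.sub
      (tendsto_const_nhds.div_atTop (tendsto_pow_atTop_atTop_of_one_lt hq'))
  have hprod := tendsto_finsetProd univ fun i _ => hfactor i
  rw [prod_const_one] at hprod
  refine hprod.congr' ?_
  filter_upwards [eventually_ge_atTop r] with n hn
  rw [indepTupleCount, Nat.cast_prod, mul_comm, pow_mul, ← Fin.prod_const r ((q : ℝ) ^ n),
    ← prod_div_distrib]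
  refine prod_congr rfl fun i _ => ?_
  rw [Nat.cast_sub (Nat.pow_le_pow_right (by omega) (by omega))]
  push_cast
  field_simp

theorem tendsto_card_finrank_span_range_mul_div {K : Type*} [Field K] [Fintype K] {m r : ℕ}
    (hr : r ≤ m) :
    Tendsto (fun n => (Nat.card {v : Fin m → Fin n → K //
        finrank K (Submodule.span K (Set.range v)) = r} : ℝ) *
          (Fintype.card K : ℝ) ^ (n - r).choose 2 / (Fintype.card K : ℝ) ^ n.choose 2)
      atTop (𝓝 ((Nat.card {W : Submodule K (Fin m → K) // finrank K W = r} : ℝ) *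
        (Fintype.card K : ℝ) ^ (r + 1).choose 2)) := by
  set q := Fintype.card K
  have hq : 1 < q := Fintype.one_lt_card
  have hGm := card_finrank_eq_mul_indepTupleCount (K := K) (V := Fin m → K) (r := r) (by simpa)
  rw [finrank_fin_fun] at hGm
  have hlim := (tendsto_indepTupleCount_div_pow hq r).mul_const
    ((Nat.card {W : Submodule K (Fin m → K) // finrank K W = r} : ℝ) * (q : ℝ) ^ (r + 1).choose 2)
  rw [one_mul] at hlim
  refine hlim.congr' ?_
  filter_upwards [eventually_ge_atTop r] with n hn
  have hGn := card_finrank_eq_mul_indepTupleCount (K := K) (V := Fin n → K) (r := r) (by simpa)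
  rw [finrank_fin_fun] at hGn
  have hexp : (q : ℝ) ^ (r * n) * (q : ℝ) ^ (n - r).choose 2 =
      (q : ℝ) ^ (r + 1).choose 2 * (q : ℝ) ^ n.choose 2 := by
    rw [← pow_add, ← pow_add, Nat.mul_add_choose_two_sub hn]
  rw [card_finrank_span_range_eq hr, ← hGn, ← hGm]
  push_cast
  field_simp
  linear_combination -(↑(Nat.card {W : Submodule K (Fin n → K) // finrank K W = r}) *
    ↑(Nat.card {W : Submodule K (Fin m → K) // finrank K W = r}) *
      (indepTupleCount q r r : ℝ)) * hexp

/-- With `P(j|n)` the probability that a uniformly random alternating `n × n` matrix over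
`𝔽₂` has kernel of dimension `j`, we have
`lim_{n→∞} Σ_{j=0}^{n} 2^{mj} P(j|n) = Σ_{j=0}^{m} gr₂(j, m) · 2^{j(j+1)/2}`. -/
theorem stmt_5 (m : ℕ) :
    Filter.Tendsto (fun n : ℕ =>
      ∑ j ∈ Finset.range (n + 1), (2 : ℝ) ^ (m * j) *
        ((Nat.card {T : Matrix (Fin n) (Fin n) (ZMod 2) //
            IsAlt2 T ∧ Module.finrank (ZMod 2) (LinearMap.ker T.mulVecLin) = j} : ℝ) /
          (Nat.card {T : Matrix (Fin n) (Fin n) (ZMod 2) // IsAlt2 T} : ℝ)))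
      Filter.atTop
      (nhds (∑ j ∈ Finset.range (m + 1),
        (Nat.card {W : Submodule (ZMod 2) (Fin m → ZMod 2) //
            Module.finrank (ZMod 2) W = j} : ℝ) * (2 : ℝ) ^ (j * (j + 1) / 2))) := by
  have hchoose (r : ℕ) : (r + 1).choose 2 = r * (r + 1) / 2 := by
    rw [Nat.choose_two_right, Nat.add_sub_cancel, mul_comm]
  have hterm (r : ℕ) (hr : r ∈ range (m + 1)) := tendsto_card_finrank_span_range_mul_div
    (K := ZMod 2) (Nat.lt_succ_iff.1 (mem_range.1 hr))
  simp only [ZMod.card, Nat.cast_ofNat, hchoose] at hterm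
  refine (tendsto_finsetSum _ hterm).congr fun n => ?_
  have hsum := sum_pow_mul_card_alternating_finrank_ker_eq (K := ZMod 2) (ι := Fin n) m
  simp only [Fintype.card_fin, ZMod.card] at hsum
  unfold IsAlt2
  rw [card_alternating, Nat.card_zmod, Fintype.card_fin]
  simp only [Nat.cast_pow, Nat.cast_ofNat, ← mul_div_assoc, ← sum_div]
  exact_mod_cast congrArg (fun x : ℕ => (x : ℝ) / 2 ^ n.choose 2) hsum.symm
end

section
/- Let ℓ be a prime, V a finite-dimensional vector space over F_ℓ, f : V → (1/ℓ)Z/Z a function such that the associated form B(v, w) = f(v + w) − f(v) − f(w) is bilinear, and suppose B is nondegenerate on some subspace V_0 ⊆ V of dimension b. Then for every group homomorphism ψ : V → C^× we have |Σ_{v ∈ V} ψ(v) exp(2πi f(v))| ≤ ℓ^{−b/2} · |V|. -/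
/-- The standard additive character of `(1/ℓ)ℤ/ℤ ≅ ZMod ℓ`, `t ↦ exp(2πi t/ℓ)`. -/
noncomputable def stdChar (ℓ : ℕ) (t : ZMod ℓ) : ℂ :=
  Complex.exp (2 * Real.pi * Complex.I * (t.val : ℂ) / (ℓ : ℂ))

/-- The associated form `B(v, w) = f(v + w) − f(v) − f(w)`. -/
def assocForm {ℓ : ℕ} {V : Type*} [AddCommGroup V] (f : V → ZMod ℓ) (v w : V) : ZMod ℓ :=
  f (v + w) - f v - f w

/-!
Write `e(v) = ψ(v) exp(2πi f(v))`. Since `f(w + u) = f(u) + f(w) + B(u, w)` and `|ψ| = 1`,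
`|S|² = Σ_w Σ_u conj(e w) e(w + u) = Σ_u e(u) Σ_w exp(2πi B(u, w))`, and the inner sum is `|V|`
on the radical `R` of `B` and `0` off it, so `|S|² ≤ |V| |R|`. As `R ∩ V₀ = 0`, the sum map
`R × V₀ → V` is injective, so `|R| ℓ^b ≤ |V|`.
-/

open ZMod (stdAddChar)
open ComplexConjugate

lemma stdChar_eq_stdAddChar {ℓ : ℕ} [NeZero ℓ] (t : ZMod ℓ) : stdChar ℓ t = stdAddChar t := by
  rw [ZMod.stdAddChar_apply, ZMod.toCircle_apply, stdChar]

def assocFormHom {ℓ : ℕ} {V : Type*} [AddCommGroup V] (f : V → ZMod ℓ)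
    (hBadd : ∀ v w₁ w₂ : V, assocForm f v (w₁ + w₂) = assocForm f v w₁ + assocForm f v w₂)
    (hBadd' : ∀ v₁ v₂ w : V, assocForm f (v₁ + v₂) w = assocForm f v₁ w + assocForm f v₂ w) :
    V →+ V →+ ZMod ℓ :=
  AddMonoidHom.mk' (fun v ↦ AddMonoidHom.mk' (assocForm f v) (hBadd v))
    fun v₁ v₂ ↦ AddMonoidHom.ext (hBadd' v₁ v₂)

lemma AddSubgroup.card_mul_card_le_card_of_disjoint {G : Type*} [AddGroup G] [Finite G]
    {H K : AddSubgroup G} (h : Disjoint H K) : Nat.card H * Nat.card K ≤ Nat.card G :=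
  Nat.card_prod H K ▸ Nat.card_le_card_of_injective _ (add_injective_of_disjoint h)

lemma le_rpow_neg_div_two_mul_of_sq_le {x n k q : ℝ} (b : ℕ) (hq : 0 < q) (hk₀ : 0 ≤ k)
    (hsq : x ^ 2 ≤ n * k) (hk : k * q ^ b ≤ n) : x ≤ q ^ (-(b : ℝ) / 2) * n := by
  have hqb : 0 < q ^ b := pow_pos hq b
  have hn : 0 ≤ n := (mul_nonneg hk₀ hqb.le).trans hk
  have hsq_rhs : (q ^ (-(b : ℝ) / 2) * n) ^ 2 = n * (n / q ^ b) := by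
    rw [mul_pow, ← Real.rpow_natCast (q ^ _), ← Real.rpow_mul hq.le, Nat.cast_two,
      div_mul_cancel₀ _ two_ne_zero, Real.rpow_neg hq.le, Real.rpow_natCast]
    ring
  refine abs_le_of_sq_le_sq' ?_ (by positivity) |>.2
  rw [hsq_rhs]
  exact hsq.trans (mul_le_mul_of_nonneg_left ((le_div_iff₀ hqb).2 hk) hn)

section QuadraticSum

variable {G : Type*} [AddCommGroup G] [Fintype G] {N : ℕ} [NeZero N]

lemma sum_stdAddChar_apply_eq_ite (φ : G →+ ZMod N) [Decidable (φ = 0)] :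
    ∑ w, stdAddChar (φ w) = if φ = 0 then (Fintype.card G : ℂ) else 0 := by
  have hzero : stdAddChar.compAddMonoidHom φ = 0 ↔ φ = 0 := by
    rw [← (AddChar.compAddMonoidHom_injective_right _ ZMod.injective_stdAddChar).eq_iff]
    constructor <;> intro h <;> ext <;> simp_all [DFunLike.ext_iff]
  simp_rw [← AddChar.compAddMonoidHom_apply, AddChar.sum_eq_ite, hzero]

theorem norm_sq_sum_stdAddChar_le (ψ : AddChar G ℂ) (f : G → ZMod N) (B : G →+ G →+ ZMod N)
    (hf : ∀ v w, f (v + w) = f v + f w + B v w) :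
    ‖∑ v, ψ v * stdAddChar (f v)‖ ^ 2 ≤ Fintype.card G * Nat.card B.ker := by
  classical
  set e : G → ℂ := fun v ↦ ψ v * stdAddChar (f v)
  have shift (w u : G) : conj (e w) * e (w + u) = e u * stdAddChar (B u w) := by
    simp only [e, map_mul, ← AddChar.map_neg_eq_conj]
    rw [add_comm w u, hf]
    calc ψ (-w) * stdAddChar (-f w) * (ψ (u + w) * stdAddChar (f u + f w + B u w))
        = ψ (-w + (u + w)) * stdAddChar (-f w + (f u + f w + B u w)) := by
          simp only [AddChar.map_add_eq_mul]; ring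
      _ = ψ u * stdAddChar (f u) * stdAddChar (B u w) := by
          rw [show -w + (u + w) = u by abel, show -f w + (f u + f w + B u w) = f u + B u w by abel,
            AddChar.map_add_eq_mul, mul_assoc]
  have hS : conj (∑ v, e v) * ∑ v, e v = ∑ u, e u * ∑ w, stdAddChar (B u w) := calc
    _ = ∑ w, ∑ v, conj (e w) * e v := by rw [map_sum, Finset.sum_mul_sum]
    _ = ∑ w, ∑ u, conj (e w) * e (w + u) := Fintype.sum_congr _ _ fun w ↦
          (Fintype.sum_equiv (Equiv.addLeft w) _ _ fun _ ↦ rfl).symm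
    _ = ∑ u, e u * ∑ w, stdAddChar (B u w) := by
          simp_rw [shift, Finset.mul_sum]; exact Finset.sum_comm
  calc ‖∑ v, e v‖ ^ 2 = ‖∑ u, e u * ∑ w, stdAddChar (B u w)‖ := by
        rw [← hS, norm_mul, RCLike.norm_conj, sq]
    _ ≤ ∑ u, ‖∑ w, stdAddChar (B u w)‖ := by
        refine (norm_sum_le _ _).trans (Finset.sum_le_sum fun u _ ↦ ?_)
        simp [e]
    _ = Fintype.card G * Nat.card B.ker := by
        simp_rw [sum_stdAddChar_apply_eq_ite, apply_ite, norm_zero, Complex.norm_natCast]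
        rw [Finset.sum_ite, Finset.sum_const_zero, add_zero, Finset.sum_const, nsmul_eq_mul,
          mul_comm, Nat.card_eq_fintype_card, Fintype.card_subtype]
        simp [AddMonoidHom.mem_ker]

end QuadraticSum

/-- Gauss-sum bound: if `f : V → (1/ℓ)ℤ/ℤ` has biadditive associated form `B`, which is
nondegenerate on a subspace `V₀` of dimension `b`, then for every character `ψ` of `V`,
`|Σ_{v ∈ V} ψ(v) e(f(v))| ≤ ℓ^{−b/2} |V|`. -/
theorem stmt_8 (ℓ : ℕ) [Fact (Nat.Prime ℓ)] (V : Type*) [AddCommGroup V]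
    [Module (ZMod ℓ) V] [Fintype V] (f : V → ZMod ℓ)
    (hBadd : ∀ v w₁ w₂ : V,
      assocForm f v (w₁ + w₂) = assocForm f v w₁ + assocForm f v w₂)
    (hBadd' : ∀ v₁ v₂ w : V,
      assocForm f (v₁ + v₂) w = assocForm f v₁ w + assocForm f v₂ w)
    (V₀ : Submodule (ZMod ℓ) V) (b : ℕ) (hb : Module.finrank (ZMod ℓ) V₀ = b)
    (hnd : ∀ v ∈ V₀, (∀ w ∈ V₀, assocForm f v w = 0) → v = 0)
    (ψ : V → ℂ) (hψ0 : ψ 0 = 1) (hψ : ∀ v w : V, ψ (v + w) = ψ v * ψ w) :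
    ‖∑ v : V, ψ v * stdChar ℓ (f v)‖ ≤
      (ℓ : ℝ) ^ (-(b : ℝ) / 2) * (Fintype.card V : ℝ) := by
  have hℓ : 0 < ℓ := (Fact.out : ℓ.Prime).pos
  set B := assocFormHom f hBadd hBadd'
  have hf (v w : V) : f (v + w) = f v + f w + B v w := by
    change _ = _ + _ + assocForm f v w
    rw [assocForm]; abel
  have hdisj : Disjoint B.ker V₀.toAddSubgroup := by
    refine disjoint_iff_inf_le.2 fun v ⟨hvB, hv₀⟩ ↦ ?_
    exact hnd v hv₀ fun w _ ↦ DFunLike.congr_fun (AddMonoidHom.mem_ker.1 hvB) w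
  have hcount : Nat.card B.ker * ℓ ^ b ≤ Fintype.card V := by
    have hV₀ : Nat.card V₀.toAddSubgroup = ℓ ^ b :=
      (Module.natCard_eq_pow_finrank (K := ZMod ℓ) (V := V₀)).trans (by rw [Nat.card_zmod, hb])
    rw [← hV₀, ← Nat.card_eq_fintype_card]
    exact AddSubgroup.card_mul_card_le_card_of_disjoint hdisj
  have hsq := norm_sq_sum_stdAddChar_le ⟨ψ, hψ0, hψ⟩ f B hf
  simp_rw [← stdChar_eq_stdAddChar] at hsq
  exact le_rpow_neg_div_two_mul_of_sq_le b (by exact_mod_cast hℓ) (Nat.cast_nonneg _) hsq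
    (by exact_mod_cast hcount)
end

section
/- Let S be a finite set, g ≥ 1 an integer, and (n_s)_{s∈S} a family of vectors in a g-dimensional vector space N over F_ℓ. Call s_0 ∈ S a pariah if there do NOT exist disjoint subsets S_1, S_2 of S \ {s_0} and scalars (a_{1s})_{s∈S_1}, (a_{2s})_{s∈S_2} in F_ℓ with Σ_{s∈S_1} a_{1s} = Σ_{s∈S_2} a_{2s} = 1 and Σ_{s∈S_1} a_{1s} n_s = Σ_{s∈S_2} a_{2s} n_s = n_{s_0}. Then the number of pariah indices is at most 2g + 2. -/
open Submodule Finsupp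

/-- Linear independence of a family each of whose members is not in the span of
its predecessors. -/
lemma linIndep_of_notMem_span_pred {K M ι : Type*} [Field K] [AddCommGroup M] [Module K M]
    [LinearOrder ι] {v : ι → M}
    (h : ∀ i, v i ∉ Submodule.span K (v '' {j | j < i})) : LinearIndependent K v := by
  classical
  rw [linearIndependent_iff]
  intro l hl
  by_contra hne
  have hsupp : l.support.Nonempty := Finsupp.support_nonempty_iff.mpr hne
  set i := l.support.max' hsupp with hi
  have hli : l i ≠ 0 := Finsupp.mem_support_iff.mp (l.support.max'_mem hsupp)
  apply h i
  have hsum : ∑ j ∈ l.support, l j • v j = 0 := by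
    rw [Finsupp.linearCombination_apply, Finsupp.sum] at hl
    exact hl
  have hsplit : l i • v i + ∑ j ∈ l.support.erase i, l j • v j = 0 := by
    rw [Finset.add_sum_erase _ (fun j => l j • v j) (l.support.max'_mem hsupp)]
    exact hsum
  have hvi : v i = ∑ j ∈ l.support.erase i, (-(l i)⁻¹ * l j) • v j := by
    have : l i • v i = - ∑ j ∈ l.support.erase i, l j • v j := by
      linear_combination (norm := module) hsplit
    calc v i = (l i)⁻¹ • (l i • v i) := by rw [smul_smul, inv_mul_cancel₀ hli, one_smul]
    _ = ∑ j ∈ l.support.erase i, (-(l i)⁻¹ * l j) • v j := by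
        rw [this, smul_neg, Finset.smul_sum, ← Finset.sum_neg_distrib]
        refine Finset.sum_congr rfl fun j _ => ?_
        rw [smul_smul, neg_mul, neg_smul]
  rw [hvi]
  refine Submodule.sum_mem _ fun j hj => Submodule.smul_mem _ _ (Submodule.subset_span ?_)
  have hjlt : j < i := lt_of_le_of_ne (l.support.le_max' j (Finset.mem_of_mem_erase hj))
    (Finset.ne_of_mem_erase hj)
  exact ⟨j, hjlt, rfl⟩

lemma card_notMem_span_pred_le {K M ι : Type*} [Field K] [AddCommGroup M] [Module K M]
    [FiniteDimensional K M] [Fintype ι] [LinearOrder ι] (v : ι → M) :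
    Nat.card {i : ι // v i ∉ Submodule.span K (v '' {j | j < i})} ≤ Module.finrank K M := by
  classical
  rw [Nat.card_eq_fintype_card]
  refine LinearIndependent.fintype_card_le_finrank (b := fun i : {i : ι // v i ∉ Submodule.span K (v '' {j | j < i})} => v i) ?_
  apply linIndep_of_notMem_span_pred
  intro i hmem
  refine i.2 (Submodule.span_mono ?_ hmem)
  rintro x ⟨j, hj, rfl⟩
  exact ⟨↑j, hj, rfl⟩

lemma exists_both {ι : Type*} [Fintype ι] (p q : ι → Prop)
    (h : Nat.card {i // ¬ p i} + Nat.card {i // ¬ q i} < Fintype.card ι) :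
    ∃ i, p i ∧ q i := by
  classical
  by_contra hc
  push_neg at hc
  have : Finset.univ ⊆ (Finset.univ.filter fun i => ¬ p i) ∪ (Finset.univ.filter fun i => ¬ q i) := by
    intro i _
    rcases Classical.em (p i) with hp | hp
    · exact Finset.mem_union_right _ (Finset.mem_filter.mpr ⟨Finset.mem_univ _, hc i hp⟩)
    · exact Finset.mem_union_left _ (Finset.mem_filter.mpr ⟨Finset.mem_univ _, hp⟩)
  have hcard := Finset.card_le_card this
  rw [Finset.card_univ] at hcard
  have := Finset.card_union_le (Finset.univ.filter fun i => ¬ p i)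
    (Finset.univ.filter fun i => ¬ q i)
  rw [Nat.card_eq_fintype_card, Nat.card_eq_fintype_card, Fintype.card_subtype,
    Fintype.card_subtype] at h
  omega



/-- The number of pariah indices for a family `(n_s)_{s ∈ S}` of vectors in a
`g`-dimensional `𝔽_ℓ`-vector space is at most `2g + 2`. An index `s₀` is a pariah if
`n_{s₀}` cannot be written as an affine combination of the vectors indexed by each of
two disjoint subsets of `S \ {s₀}`. -/
theorem stmt_10 (ℓ : ℕ) [Fact (Nat.Prime ℓ)] (S : Type*) [Fintype S] [DecidableEq S]
    (g : ℕ) (hg : 1 ≤ g) (N : Type*) [AddCommGroup N] [Module (ZMod ℓ) N]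
    (hdim : Module.finrank (ZMod ℓ) N = g) (n : S → N) :
    Nat.card {s₀ : S // ¬ ∃ (S₁ S₂ : Finset S) (a₁ a₂ : S → ZMod ℓ),
        Disjoint S₁ S₂ ∧ s₀ ∉ S₁ ∧ s₀ ∉ S₂ ∧
        (∑ s ∈ S₁, a₁ s) = 1 ∧ (∑ s ∈ S₂, a₂ s) = 1 ∧
        (∑ s ∈ S₁, a₁ s • n s) = n s₀ ∧ (∑ s ∈ S₂, a₂ s • n s) = n s₀} ≤
      2 * g + 2 := by
  classical
  set K := ZMod ℓ
  set Pariah : S → Prop := fun s₀ => ¬ ∃ (S₁ S₂ : Finset S) (a₁ a₂ : S → K),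
        Disjoint S₁ S₂ ∧ s₀ ∉ S₁ ∧ s₀ ∉ S₂ ∧
        (∑ s ∈ S₁, a₁ s) = 1 ∧ (∑ s ∈ S₂, a₂ s) = 1 ∧
        (∑ s ∈ S₁, a₁ s • n s) = n s₀ ∧ (∑ s ∈ S₂, a₂ s • n s) = n s₀ with hP
  show Nat.card {s₀ : S // Pariah s₀} ≤ 2 * g + 2
  haveI : FiniteDimensional K N := FiniteDimensional.of_finrank_pos (hdim ▸ hg)
  set M := N × K with hM
  have hfr : Module.finrank K M = g + 1 := by
    rw [Module.finrank_prod, hdim, Module.finrank_self]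
  set ι := {s₀ : S // Pariah s₀} with hι
  haveI : Fintype ι := Fintype.ofFinite ι
  letI : LinearOrder ι := LinearOrder.lift' (Fintype.equivFin ι) (Equiv.injective _)
  set v : ι → M := fun i => (n ↑i, 1) with hv
  by_contra hbig
  push_neg at hbig
  -- counting
  have h1 : Nat.card {i : ι // v i ∉ Submodule.span K (v '' {j | j < i})} ≤ g + 1 :=
    hfr ▸ card_notMem_span_pred_le v
  have h2 : Nat.card {i : ι // v i ∉ Submodule.span K (v '' {j | i < j})} ≤ g + 1 := by
    have := hfr ▸ card_notMem_span_pred_le (ι := ιᵒᵈ) (K := K) v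
    exact this
  have hcard : Fintype.card ι > (g + 1) + (g + 1) := by
    have : Nat.card ι = Fintype.card ι := Nat.card_eq_fintype_card
    omega
  obtain ⟨i, hA, hB⟩ := exists_both
    (fun i : ι => v i ∈ Submodule.span K (v '' {j | j < i}))
    (fun i : ι => v i ∈ Submodule.span K (v '' {j | i < j}))
    (lt_of_le_of_lt (Nat.add_le_add h1 h2) hcard)
  -- extract representations
  rw [Finsupp.mem_span_image_iff_linearCombination] at hA hB
  obtain ⟨l₁, hl₁s, hl₁⟩ := hA
  obtain ⟨l₂, hl₂s, hl₂⟩ := hB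
  rw [Finsupp.mem_supported] at hl₁s hl₂s
  set m : S → M := fun s => (n s, 1) with hm
  have mk : ∀ (l : ι →₀ K), Finsupp.linearCombination K v l = v i →
      ∃ (T : Finset S) (a : S → K),
        (∀ s ∈ T, ∃ j : ι, j ∈ l.support ∧ Subtype.val j = s) ∧
        (∑ s ∈ T, a s) = 1 ∧ (∑ s ∈ T, a s • n s) = n ↑i := by
    intro l hl
    set T := l.support.image (Subtype.val) with hT
    set a : S → K := fun s => if h : Pariah s then l ⟨s, h⟩ else 0 with ha
    have hinj : ∀ x ∈ l.support, ∀ y ∈ l.support, (↑x : S) = ↑y → x = y := by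
      intro x _ y _ hxy
      exact Subtype.coe_injective hxy
    have hmsum : ∑ s ∈ T, a s • m s = m ↑i := by
      rw [hT, Finset.sum_image hinj]
      calc ∑ j ∈ l.support, a ↑j • m ↑j = ∑ j ∈ l.support, l j • v j := by
            refine Finset.sum_congr rfl fun j hj => ?_
            have : a ↑j = l j := by
              rw [ha]
              simp only []
              rw [dif_pos j.2, Subtype.coe_eta]
            rw [this]
        _ = m ↑i := by
            rw [Finsupp.linearCombination_apply, Finsupp.sum] at hl
            exact hl
    have hsnd : ∑ s ∈ T, a s = 1 := by
      have h2 := congrArg (fun x : M => (LinearMap.snd K N K) x) hmsum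
      simp only [map_sum, LinearMap.snd_apply, LinearMap.map_smul] at h2
      simpa [m, smul_eq_mul] using h2
    have hfst : ∑ s ∈ T, a s • n s = n ↑i := by
      have h1 := congrArg (fun x : M => (LinearMap.fst K N K) x) hmsum
      simp only [map_sum, LinearMap.fst_apply, LinearMap.map_smul] at h1
      simpa [m] using h1
    refine ⟨T, a, ?_, hsnd, hfst⟩
    intro s hs
    rw [hT, Finset.mem_image] at hs
    obtain ⟨j, hj, rfl⟩ := hs
    exact ⟨j, hj, rfl⟩
  obtain ⟨T₁, a₁, hmem₁, hsum₁, hvec₁⟩ := mk l₁ hl₁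
  obtain ⟨T₂, a₂, hmem₂, hsum₂, hvec₂⟩ := mk l₂ hl₂
  refine i.2 ⟨T₁, T₂, a₁, a₂, ?_, ?_, ?_, hsum₁, hsum₂, hvec₁, hvec₂⟩
  · rw [Finset.disjoint_left]
    intro s hs₁ hs₂
    obtain ⟨j₁, hj₁, rfl⟩ := hmem₁ s hs₁
    obtain ⟨j₂, hj₂, hj₂e⟩ := hmem₂ ↑j₁ hs₂
    have : j₂ = j₁ := Subtype.coe_injective hj₂e
    have hlt₁ : j₁ < i := hl₁s hj₁
    have hlt₂ : i < j₂ := hl₂s hj₂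
    rw [this] at hlt₂
    exact absurd (hlt₁.trans hlt₂) (lt_irrefl _)
  · intro hi
    obtain ⟨j, hj, hje⟩ := hmem₁ ↑i hi
    have hji : j = i := Subtype.coe_injective hje
    have hlt : j < i := hl₁s hj
    rw [hji] at hlt
    exact lt_irrefl _ hlt
  · intro hi
    obtain ⟨j, hj, hje⟩ := hmem₂ ↑i hi
    have hji : j = i := Subtype.coe_injective hje
    have hlt : i < j := hl₂s hj
    rw [hji] at hlt
    exact lt_irrefl _ hlt
end

section
/- Let G be a finite nonempty set, R ≥ 1 an integer, σ_0 ∈ G, and let X_1, X_2, … be i.i.d. uniform random variables on G. For n ≥ 1 define g_n(σ) = #{i ≤ n : X_i = σ}. Then for any function a : G \ {σ_0} → Z/RZ, the probability Pr(g_n(σ) ≡ a(σ) mod R for all σ ∈ G \ {σ_0}) converges to R^{1−|G|} as n → ∞; moreover there exist constants C, c > 0 depending only on G and R so that this probability is within C e^{−cn} of R^{1−|G|}. -/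
/-! The residues of the counts form a random walk on `A = {σ // σ ≠ σ₀} → ZMod R` whose steps are
`φ g = e_g` (with `e_{σ₀} = 0`) for a uniform `g`. By orthogonality of characters its law at `b` is
`𝔼_ψ ψ(-b) (𝔼_g ψ(φ g))ⁿ`, and the trivial character contributes `|A|⁻¹ = R^{1-|G|}`. A nontrivial
`ψ` is `1` at `φ σ₀ = 0` but differs from `1` at some `e_σ`, so by strict convexity of `ℂ`,
`‖𝔼_g ψ(φ g)‖ < 1`; the largest of these finitely many numbers bounds the error by `qⁿ`. -/

open Filter

/-- The probability that, among `n` i.i.d. uniform samples from `G`, the count of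
occurrences of each `σ ≠ σ₀` is congruent to `a σ` mod `R`. -/
noncomputable def countProb (G : Type*) [Fintype G] [DecidableEq G] (R : ℕ) (σ₀ : G)
    (n : ℕ) (a : G → ZMod R) : ℝ :=
  (Nat.card {x : Fin n → G // ∀ σ : G, σ ≠ σ₀ →
      (((Finset.univ.filter (fun i => x i = σ)).card : ZMod R) = a σ)} : ℝ) /
    (Fintype.card G : ℝ) ^ n

open Finset
open scoped BigOperators NNReal

theorem AddChar.map_sum_eq_prod {A M ι : Type*} [AddCommMonoid A] [CommMonoid M]
    (ψ : AddChar A M) (s : Finset ι) (f : ι → A) : ψ (∑ i ∈ s, f i) = ∏ i ∈ s, ψ (f i) := by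
  induction s using Finset.cons_induction with
  | empty => simp
  | cons a s ha ih => rw [sum_cons, prod_cons, AddChar.map_add_eq_mul, ih]

theorem AddChar.eq_zero_of_map_single_one {ι M : Type*} [Fintype ι] [DecidableEq ι]
    [CommMonoid M] {R : ℕ} [NeZero R] (ψ : AddChar (ι → ZMod R) M)
    (h : ∀ i, ψ (Pi.single i 1) = 1) : ψ = 0 := by
  ext v
  have hsingle : ∀ i, Pi.single i (v i) = (v i).val • (Pi.single i 1 : ι → ZMod R) := by
    intro i
    rw [← Pi.single_smul, nsmul_eq_mul, mul_one, ZMod.natCast_zmod_val]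
  rw [← univ_sum_single v, AddChar.map_sum_eq_prod, AddChar.zero_apply]
  exact prod_eq_one fun i _ => by rw [hsingle, AddChar.map_nsmul_eq_pow, h, one_pow]

theorem Complex.norm_expect_lt_one {G : Type*} [Fintype G] {z : G → ℂ} (hz : ∀ g, ‖z g‖ ≤ 1)
    {g₀ g₁ : G} (hne : z g₀ ≠ z g₁) : ‖𝔼 g, z g‖ < 1 := by
  have : Nonempty G := ⟨g₀⟩
  have hG : (Fintype.card G : ℝ) ≠ 0 := Nat.cast_ne_zero.mpr Fintype.card_ne_zero
  have := norm_sum_lt_of_strictConvexSpace (t := univ) (w := fun _ => (Fintype.card G : ℝ)⁻¹)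
    (fun _ _ => by positivity) (by simp [hG]) (mem_univ g₀) (mem_univ g₁) hne
    (inv_ne_zero hG) (inv_ne_zero hG) (fun g _ => hz g)
  simpa [Fintype.expect_eq_sum_div_card, ← Finset.sum_div, div_eq_inv_mul, Complex.real_smul,
    ← Finset.mul_sum] using this

section RandomWalk

variable {G A : Type*} [Fintype G] [AddCommGroup A] [Fintype A] [DecidableEq A]

noncomputable def walkProb (φ : G → A) (n : ℕ) (b : A) : ℝ :=
  #{x : Fin n → G | ∑ i, φ (x i) = b} / Fintype.card G ^ n

theorem walkProb_eq_expect_addChar (φ : G → A) (n : ℕ) (b : A) :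
    (walkProb φ n b : ℂ) = 𝔼 ψ : AddChar A ℂ, ψ (-b) * (𝔼 g, ψ (φ g)) ^ n := by
  calc (walkProb φ n b : ℂ)
      = 𝔼 x : Fin n → G, if ∑ i, φ (x i) - b = 0 then 1 else 0 := by
        simp only [walkProb, Fintype.expect_eq_sum_div_card, sum_boole, sub_eq_zero,
          Fintype.card_fun, Fintype.card_fin]
        push_cast; rfl
    _ = 𝔼 x : Fin n → G, 𝔼 ψ : AddChar A ℂ, ψ (-b) * ∏ i, ψ (φ (x i)) := by
        refine expect_congr rfl fun x _ => ?_
        rw [← AddChar.expect_apply_eq_ite]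
        refine expect_congr rfl fun ψ _ => ?_
        rw [sub_eq_neg_add, AddChar.map_add_eq_mul, AddChar.map_sum_eq_prod]
    _ = 𝔼 ψ : AddChar A ℂ, ψ (-b) * (𝔼 g, ψ (φ g)) ^ n := by
        rw [expect_comm]
        simp_rw [← mul_expect, expect_pow, Fintype.piFinset_univ]

theorem abs_walkProb_sub_inv_card_le [Nonempty G] {φ : G → A} {q : ℝ} (hq₀ : 0 ≤ q)
    (hq : ∀ ψ : AddChar A ℂ, ψ ≠ 0 → ‖𝔼 g, ψ (φ g)‖ ≤ q) (n : ℕ) (b : A) :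
    |walkProb φ n b - (Fintype.card A : ℝ)⁻¹| ≤ q ^ n := by
  have hmain : ((walkProb φ n b - (Fintype.card A : ℝ)⁻¹ : ℝ) : ℂ) =
      𝔼 ψ : AddChar A ℂ, (ψ (-b) * (𝔼 g, ψ (φ g)) ^ n - if ψ = 0 then 1 else 0) := by
    rw [expect_sub_distrib, ← walkProb_eq_expect_addChar, Fintype.expect_ite_eq']
    simp [AddChar.card_eq, NNRat.smul_def]
  have hterm : ∀ ψ : AddChar A ℂ,
      ‖ψ (-b) * (𝔼 g, ψ (φ g)) ^ n - if ψ = 0 then 1 else 0‖ ≤ q ^ n := by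
    intro ψ
    split_ifs with hψ
    · simp [hψ, pow_nonneg hq₀]
    · rw [sub_zero, norm_mul, AddChar.norm_apply, one_mul, norm_pow]
      exact pow_le_pow_left₀ (norm_nonneg _) (hq ψ hψ) n
  rw [← Real.norm_eq_abs, ← Complex.norm_real, hmain]
  calc _ ≤ 𝔼 ψ : AddChar A ℂ, ‖ψ (-b) * (𝔼 g, ψ (φ g)) ^ n - if ψ = 0 then 1 else 0‖ :=
        RCLike.norm_expect_le (K := ℂ)
    _ ≤ q ^ n := expect_le univ_nonempty fun ψ _ => hterm ψ

theorem exists_abs_walkProb_sub_inv_card_le_pow [Nonempty G] {φ : G → A}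
    (hφ : ∀ ψ : AddChar A ℂ, ψ ≠ 0 → ∃ g₀ g₁, ψ (φ g₀) ≠ ψ (φ g₁)) :
    ∃ q : ℝ, 0 ≤ q ∧ q < 1 ∧ ∀ n b, |walkProb φ n b - (Fintype.card A : ℝ)⁻¹| ≤ q ^ n := by
  classical
  let q : ℝ≥0 := univ.sup fun ψ : AddChar A ℂ => if ψ = 0 then 0 else ‖𝔼 g, ψ (φ g)‖₊
  have hq : ∀ ψ : AddChar A ℂ, ψ ≠ 0 → ‖𝔼 g, ψ (φ g)‖ ≤ q := fun ψ hψ => by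
    have := le_sup (f := fun ψ : AddChar A ℂ => if ψ = 0 then 0 else ‖𝔼 g, ψ (φ g)‖₊)
      (mem_univ ψ)
    rw [if_neg hψ] at this
    exact_mod_cast this
  have hq_lt : q < 1 := by
    refine (Finset.sup_lt_iff one_pos).2 fun ψ _ => ?_
    split_ifs with hψ
    · exact one_pos
    · obtain ⟨g₀, g₁, hne⟩ := hφ ψ hψ
      rw [← NNReal.coe_lt_coe, coe_nnnorm, NNReal.coe_one]
      exact Complex.norm_expect_lt_one (fun g => (AddChar.norm_apply ..).le) hne
  exact ⟨q, q.2, hq_lt, abs_walkProb_sub_inv_card_le q.2 hq⟩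

end RandomWalk

theorem exists_pow_le_exp {q : ℝ} (hq₀ : 0 ≤ q) (hq : q < 1) :
    ∃ c > 0, ∀ n : ℕ, q ^ n ≤ Real.exp (-c * n) := by
  have hr₀ : 0 < (1 + q) / 2 := by linarith
  refine ⟨-Real.log ((1 + q) / 2), neg_pos.2 (Real.log_neg hr₀ (by linarith)), fun n => ?_⟩
  rw [neg_neg, mul_comm, Real.exp_nat_mul, Real.exp_log hr₀]
  exact pow_le_pow_left₀ hq₀ (by linarith) n

section Residues
variable {G : Type*} [DecidableEq G]

def residueIncrement (R : ℕ) (σ₀ g : G) : {σ : G // σ ≠ σ₀} → ZMod R :=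
  fun σ => if g = σ.1 then 1 else 0

theorem sum_residueIncrement (R : ℕ) (σ₀ : G) {n : ℕ} (x : Fin n → G) :
    ∑ i, residueIncrement R σ₀ (x i) = fun σ => (#{i | x i = σ.1} : ZMod R) := by
  funext σ
  simp [residueIncrement, Finset.sum_apply]

theorem countProb_eq_walkProb [Fintype G] (R : ℕ) (σ₀ : G) (n : ℕ) (a : G → ZMod R) :
    countProb G R σ₀ n a = walkProb (residueIncrement R σ₀) n (fun σ => a σ.1) := by
  rw [countProb, walkProb, Nat.card_eq_fintype_card, Fintype.card_subtype]
  congr 3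
  ext x
  simp [sum_residueIncrement, funext_iff]

theorem residueIncrement_self (R : ℕ) (σ₀ : G) : residueIncrement R σ₀ σ₀ = 0 := by
  funext σ
  simp [residueIncrement, Ne.symm σ.2]

theorem residueIncrement_of_ne (R : ℕ) {σ₀ : G} (σ : {σ : G // σ ≠ σ₀}) :
    residueIncrement R σ₀ σ.1 = Pi.single σ 1 := by
  funext τ
  simp [residueIncrement, Pi.single_apply, Subtype.ext_iff, eq_comm]

theorem exists_addChar_residueIncrement_ne [Fintype G] {M : Type*} [CommMonoid M] (R : ℕ)
    [NeZero R] (σ₀ : G) {ψ : AddChar ({σ : G // σ ≠ σ₀} → ZMod R) M} (hψ : ψ ≠ 0) :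
    ∃ g₀ g₁, ψ (residueIncrement R σ₀ g₀) ≠ ψ (residueIncrement R σ₀ g₁) := by
  contrapose! hψ
  refine AddChar.eq_zero_of_map_single_one ψ fun σ => ?_
  rw [← residueIncrement_of_ne, hψ σ.1 σ₀, residueIncrement_self, AddChar.map_zero_eq_one]

theorem card_residues_inv_eq_zpow [Fintype G] [Nonempty G] (R : ℕ) [NeZero R] (σ₀ : G) :
    ((Fintype.card ({σ : G // σ ≠ σ₀} → ZMod R) : ℕ) : ℝ)⁻¹ =
      (R : ℝ) ^ ((1 : ℤ) - (Fintype.card G : ℤ)) := by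
  have hcard : Fintype.card {σ : G // σ ≠ σ₀} + 1 = Fintype.card G := by
    simp [Fintype.card_subtype_compl, Nat.sub_add_cancel Fintype.card_pos]
  rw [Fintype.card_fun, ZMod.card, ← hcard]
  push_cast
  rw [sub_add_cancel_right, zpow_neg, zpow_natCast]

end Residues

/-- For i.i.d. uniform samples on a finite nonempty set `G`, the probability that the
counts `g_n(σ)` are congruent to `a(σ)` mod `R` for all `σ ≠ σ₀` converges to
`R^{1−|G|}`, with an exponential rate `C e^{−cn}` whose constants depend only on `G`
and `R`. -/
theorem stmt_13 (G : Type*) [Fintype G] [DecidableEq G] [Nonempty G] (R : ℕ)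
    (hR : 1 ≤ R) (σ₀ : G) :
    (∀ a : G → ZMod R,
      Tendsto (fun n => countProb G R σ₀ n a) atTop
        (nhds ((R : ℝ) ^ ((1 : ℤ) - (Fintype.card G : ℤ))))) ∧
    ∃ C > (0 : ℝ), ∃ c > (0 : ℝ), ∀ n : ℕ, 1 ≤ n → ∀ a : G → ZMod R,
      |countProb G R σ₀ n a - (R : ℝ) ^ ((1 : ℤ) - (Fintype.card G : ℤ))| ≤
        C * Real.exp (-c * n) := by
  have : NeZero R := ⟨by omega⟩
  obtain ⟨q, hq₀, hq₁, hbound⟩ := exists_abs_walkProb_sub_inv_card_le_pow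
    fun ψ hψ => exists_addChar_residueIncrement_ne R σ₀ hψ
  have hcount : ∀ n a, |countProb G R σ₀ n a - (R : ℝ) ^ ((1 : ℤ) - (Fintype.card G : ℤ))| ≤
      q ^ n := fun n a => by
    rw [countProb_eq_walkProb, ← card_residues_inv_eq_zpow]
    exact hbound n _
  obtain ⟨c, hc, hqc⟩ := exists_pow_le_exp hq₀ hq₁
  refine ⟨fun a => ?_, 1, one_pos, c, hc, fun n _ a => (hcount n a).trans ?_⟩
  · exact tendsto_sub_nhds_zero_iff.1 <| squeeze_zero_norm
      (fun n => (Real.norm_eq_abs _).trans_le (hcount n a))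
      (tendsto_pow_atTop_nhds_zero_of_lt_one hq₀ hq₁)
  · rw [one_mul]; exact hqc n
end
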